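/- arXiv:1905.09729 — 4 statements merged into one kernel-verified Lean document; each statement's English description precedes it below -/
import Mathlib

section
/- With the setup of the auxiliary graph construction, if C ⊆ A is a non-empty colour-alternating cycle of length L with no neighbouring vertices, then the 2-factor F(C) of G has at most L connected components. -/
/-- Red part of the auxiliary graph `A(G,H)` (vertices indexed by `ZMod n`, vertex
`i` standing for the Hamilton-cycle edge `e_i = v_i v_{i+1}`): a red edge `e_i e_j`
iff `v_{i+1} v_{j+1}` is an inner edge of `G`. -/
def auxRed (n : ℕ) (G : SimpleGraph (ZMod n)) : SimpleGraph (ZMod n) where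
  Adj i j := G.Adj (i + 1) (j + 1) ∧ j ≠ i + 1 ∧ i ≠ j + 1
  symm := ⟨fun i j h => ⟨h.1.symm, h.2.2, h.2.1⟩⟩
  loopless := ⟨fun i h => G.loopless.irrefl (i + 1) h.1⟩

/-- Blue part of `A(G,H)`: a blue edge `e_i e_j` iff `v_i v_j` is an inner edge. -/
def auxBlue (n : ℕ) (G : SimpleGraph (ZMod n)) : SimpleGraph (ZMod n) where
  Adj i j := G.Adj i j ∧ j ≠ i + 1 ∧ i ≠ j + 1
  symm := ⟨fun i j h => ⟨h.1.symm, h.2.2, h.2.1⟩⟩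
  loopless := ⟨fun i h => G.loopless.irrefl i h.1⟩

/-- The 2-factor `F(S)` of `G` corresponding to a union `S` of vertex-disjoint
colour-alternating cycles in `A(G,H)` with vertex set `T` and red/blue partner
functions `r`, `b`. -/
def FSgraph (n : ℕ) (T : Finset (ZMod n)) (r b : ZMod n → ZMod n) :
    SimpleGraph (ZMod n) :=
  SimpleGraph.fromRel (fun x y =>
    (y = x + 1 ∧ x ∉ T) ∨ (x - 1 ∈ T ∧ y = r (x - 1) + 1) ∨ (x ∈ T ∧ y = b x))

/-! Every component of `F(C)` contains an inner edge, hence a vertex of `T`: walking forward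
along the Hamilton cycle from any vertex, the Hamilton edge `x (x+1)` is kept in `F(C)` until
the walk reaches `T`. So `T` maps onto the components and there are at most `|T| = L` of them. -/

lemma SimpleGraph.card_connectedComponent_le_of_forall_exists_reachable {V : Type*}
    {G : SimpleGraph V} (s : Finset V) (h : ∀ x, ∃ t ∈ s, G.Reachable x t) :
    Nat.card G.ConnectedComponent ≤ s.card := by
  have hsurj : Function.Surjective fun t : s => G.connectedComponentMk t.1 := by
    intro c
    induction c using SimpleGraph.ConnectedComponent.ind with
    | _ x =>
      obtain ⟨t, ht, hxt⟩ := h x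
      exact ⟨⟨t, ht⟩, SimpleGraph.ConnectedComponent.sound hxt.symm⟩
  simpa using Nat.card_le_card_of_surjective _ hsurj

section FSgraph

variable {n : ℕ} (T : Finset (ZMod n)) (r b : ZMod n → ZMod n)

lemma FSgraph_reachable_add_one {x : ZMod n} (hx : x ∉ T) :
    (FSgraph n T r b).Reachable x (x + 1) := by
  by_cases hloop : x = x + 1
  · exact hloop ▸ SimpleGraph.Reachable.refl x
  · exact SimpleGraph.Adj.reachable ⟨hloop, Or.inl (Or.inl ⟨rfl, hx⟩)⟩

lemma FSgraph_exists_mem_reachable (k : ℕ) :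
    ∀ x : ZMod n, x + k ∈ T → ∃ t ∈ T, (FSgraph n T r b).Reachable x t := by
  induction k with
  | zero => exact fun x hx => ⟨x, by simpa using hx, .refl x⟩
  | succ k ih =>
    intro x hx
    by_cases hxT : x ∈ T
    · exact ⟨x, hxT, .refl x⟩
    · obtain ⟨t, ht, hreach⟩ := ih (x + 1) (by rwa [Nat.cast_succ, add_comm (k : ZMod n),
        ← add_assoc] at hx)
      exact ⟨t, ht, (FSgraph_reachable_add_one T r b hxT).trans hreach⟩

end FSgraph

theorem stmt_8_general (n : ℕ) [NeZero n]
    (L : ℕ) (hL : 0 < L)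
    (T : Finset (ZMod n)) (r b : ZMod n → ZMod n)
    (hcard : T.card = L) :
    Nat.card (FSgraph n T r b).ConnectedComponent ≤ L := by
  obtain ⟨t₀, ht₀⟩ := Finset.card_pos.mp (hcard ▸ hL)
  refine hcard ▸ SimpleGraph.card_connectedComponent_le_of_forall_exists_reachable T fun x => ?_
  exact FSgraph_exists_mem_reachable T r b (t₀ - x).val x (by simpa using ht₀)

/-- If `C ⊆ A(G,H)` is a non-empty single colour-alternating cycle of length `L`
(encoded by its vertex set `T` of cardinality `L`, red/blue partner functions and
the condition that the cycle is connected, i.e. any set containing some vertex of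
`C` and closed under `r` and `b` contains all of `C`) with no neighbouring
vertices, then the 2-factor `F(C)` has at most `L` connected components. -/
theorem stmt_8 (n : ℕ) [NeZero n] (hn : 3 ≤ n) (G : SimpleGraph (ZMod n))
    (hH : ∀ i : ZMod n, G.Adj i (i + 1))
    (L : ℕ) (hL : 0 < L)
    (T : Finset (ZMod n)) (r b : ZMod n → ZMod n)
    (hcard : T.card = L)
    (hr : ∀ i ∈ T, r i ∈ T ∧ r (r i) = i ∧ (auxRed n G).Adj i (r i))
    (hb : ∀ i ∈ T, b i ∈ T ∧ b (b i) = i ∧ (auxBlue n G).Adj i (b i))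
    (hconn : ∀ (P : ZMod n → Prop) (x : ZMod n), x ∈ T → P x →
      (∀ z ∈ T, P z → P (r z) ∧ P (b z)) → ∀ y ∈ T, P y)
    (hnb : ∀ i ∈ T, i + 1 ∉ T) :
    Nat.card (FSgraph n T r b).ConnectedComponent ≤ L :=
  stmt_8_general n L hL T r b hcard
end

section
/- Let S ⊆ A be a disjoint union of colour-alternating cycles without neighbouring vertices, where A = A(G, H) is the auxiliary graph of a Hamiltonian graph G. If the 2-factor F(S) has more than one connected component, then some vertex e_k of S separates components of F(S), i.e., v_k and v_{k+1} lie in different components of F(S). -/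
theorem SimpleGraph.preconnected_of_reachable_add_one {n : ℕ} [NeZero n]
    {G : SimpleGraph (ZMod n)} (h : ∀ x, G.Reachable x (x + 1)) : G.Preconnected := by
  have reach_add : ∀ (m : ℕ) (x : ZMod n), G.Reachable x (x + m) := by
    intro m
    induction m with
    | zero => simp
    | succ k ih => intro x; simpa [add_assoc] using (ih x).trans (h (x + k))
  intro x y
  simpa using reach_add (y - x).val x

theorem FSgraph_reachable_add_one_of_notMem {n : ℕ} {T : Finset (ZMod n)}
    {r b : ZMod n → ZMod n} {x : ZMod n} (hx : x ∉ T) :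
    (FSgraph n T r b).Reachable x (x + 1) := by
  by_cases hloop : x + 1 = x
  · rw [hloop]
  · exact SimpleGraph.Adj.reachable ⟨Ne.symm hloop, Or.inl (Or.inl ⟨rfl, hx⟩)⟩

theorem stmt_9_general (n : ℕ) [NeZero n]
    (T : Finset (ZMod n)) (r b : ZMod n → ZMod n)
    (hcomp : 1 < Nat.card (FSgraph n T r b).ConnectedComponent) :
    ∃ k ∈ T, ¬ (FSgraph n T r b).Reachable k (k + 1) := by
  by_contra! hsep
  have hpre : (FSgraph n T r b).Preconnected :=
    SimpleGraph.preconnected_of_reachable_add_one fun x =>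
      if hx : x ∈ T then hsep x hx else FSgraph_reachable_add_one_of_notMem hx
  exact hcomp.not_ge (Finite.card_le_one_iff_subsingleton.mpr hpre.subsingleton_connectedComponent)

/-- If `S ⊆ A(G,H)` is a disjoint union of colour-alternating cycles without
neighbouring vertices and the 2-factor `F(S)` has more than one connected
component, then some vertex `e_k` of `S` separates components of `F(S)`, i.e.
`v_k` and `v_{k+1}` lie in different components of `F(S)`. -/
theorem stmt_9 (n : ℕ) [NeZero n] (hn : 3 ≤ n) (G : SimpleGraph (ZMod n))
    (hH : ∀ i : ZMod n, G.Adj i (i + 1))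
    (T : Finset (ZMod n)) (r b : ZMod n → ZMod n)
    (hr : ∀ i ∈ T, r i ∈ T ∧ r (r i) = i ∧ (auxRed n G).Adj i (r i))
    (hb : ∀ i ∈ T, b i ∈ T ∧ b (b i) = i ∧ (auxBlue n G).Adj i (b i))
    (hnb : ∀ i ∈ T, i + 1 ∉ T)
    (hcomp : 1 < Nat.card (FSgraph n T r b).ConnectedComponent) :
    ∃ k ∈ T, ¬ (FSgraph n T r b).Reachable k (k + 1) :=
  stmt_9_general n T r b hcomp
end

section
/- Let S ⊆ A be a disjoint union of colour-alternating cycles without neighbouring vertices, and let U be an ordered subgraph of A without neighbouring vertices that is a going-up version of S. Then the 2-factor F(U) of G has exactly one more connected component than F(S). -/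
/-- The 2-factor `F(U)` of `G` corresponding to a going-up version `U` of `S`
embedded in `A(G,H)`: the original vertices of `S` (with vertex set `T`, partners
`r`, `b`) are embedded by `g`, and the extra copy of the cycle `C` of `S` (with
vertex set `T' ⊆ T`) is embedded by `g'`.  The edges of `F(U)` are the Hamilton
edges `v_x v_{x+1}` with `e_x` not a vertex of `U`, together with the inner edges
of `G` corresponding to the red/blue edges of `U`. -/
def FUgraph (n : ℕ) (T T' : Finset (ZMod n)) (r b g g' : ZMod n → ZMod n) :
    SimpleGraph (ZMod n) :=
  SimpleGraph.fromRel (fun x y =>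
    (y = x + 1 ∧ x ∉ g '' (T : Set (ZMod n)) ∪ g' '' (T' : Set (ZMod n))) ∨
    (∃ s ∈ T, x = g s + 1 ∧ y = g (r s) + 1) ∨
    (∃ s ∈ T, x = g s ∧ y = g (b s)) ∨
    (∃ s ∈ T', x = g' s + 1 ∧ y = g' (r s) + 1) ∨
    (∃ s ∈ T', x = g' s ∧ y = g' (b s)))

/-!
Walking along a 2-factor, every cycle is traversed in two directions, so twice the number of
components of `F(S)` is the number of orbits of the walk on (vertex, direction) states. Every orbit
crosses a red edge, so this is also the number of orbits of the first-return map to the red edges,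
a permutation of `T`.

`F(U)` is the 2-factor of the vertex set of `U` with the matchings carried over from `U(S, C)`.
Since the embedding of `U(S, C)` preserves the cyclic order, its next and previous vertices are
computed inside `U(S, C)`: on the vertices `s ∉ C` and `s_{i+1/2}`, `s ∈ C`, the return map of
`F(U)` is that of `F(S)`, and on the old vertices of `C` it is the rotation `r ∘ b` of the
alternating cycle `C`, which has exactly two orbits. Hence `2 c(F(U)) = 2 c(F(S)) + 2`.
-/

open Function

section OrbitRel

variable {α : Type*}

def OrbitRel (f : α → α) (x y : α) : Prop := ∃ k l : ℕ, f^[k] x = f^[l] y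

namespace OrbitRel

variable {f : α → α} {x y z : α}

theorem refl (f : α → α) (x : α) : OrbitRel f x x := ⟨0, 0, rfl⟩

theorem symm (h : OrbitRel f x y) : OrbitRel f y x :=
  let ⟨k, l, h⟩ := h; ⟨l, k, h.symm⟩

theorem trans (h₁ : OrbitRel f x y) (h₂ : OrbitRel f y z) : OrbitRel f x z := by
  obtain ⟨k, l, h₁⟩ := h₁
  obtain ⟨p, q, h₂⟩ := h₂
  refine ⟨p + k, l + q, ?_⟩
  rw [iterate_add_apply, h₁, ← iterate_add_apply, Nat.add_comm p l, iterate_add_apply, h₂,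
    ← iterate_add_apply]

theorem apply_right (f : α → α) (x : α) : OrbitRel f x (f x) := ⟨1, 0, rfl⟩

theorem exists_iterate_eq (hf : Injective f) (h : OrbitRel f x y) :
    ∃ m, f^[m] x = y ∨ f^[m] y = x := by
  obtain ⟨k, l, h⟩ := h
  rcases Nat.le_total l k with hlk | hkl
  · refine ⟨k - l, Or.inl <| hf.iterate l ?_⟩
    rw [← iterate_add_apply, Nat.add_sub_cancel' hlk, h]
  · refine ⟨l - k, Or.inr <| hf.iterate k ?_⟩
    rw [← iterate_add_apply, Nat.add_sub_cancel' hkl, h]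

theorem iterate_reverse {τ : α → α} (hrev : ∀ x, f (τ (f x)) = τ x) (k : ℕ) (x : α) :
    f^[k] (τ (f^[k] x)) = τ x := by
  induction k generalizing x with
  | zero => rfl
  | succ k ih => rw [iterate_succ_apply, iterate_succ_apply' f k, hrev, ih]

theorem reverse {τ : α → α} (hrev : ∀ x, f (τ (f x)) = τ x) (h : OrbitRel f x y) :
    OrbitRel f (τ x) (τ y) := by
  obtain ⟨k, l, h⟩ := h
  refine ⟨l, k, ?_⟩
  rw [← iterate_reverse hrev k x, ← iterate_reverse hrev l y, h, ← iterate_add_apply,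
    ← iterate_add_apply, Nat.add_comm]

end OrbitRel

def orbitSetoid (f : α → α) : Setoid α :=
  ⟨OrbitRel f, ⟨OrbitRel.refl f, OrbitRel.symm, OrbitRel.trans⟩⟩

noncomputable def numOrbits (f : α → α) : ℕ := Nat.card (Quotient (orbitSetoid f))

/-- If `f^[m] x = τ x`, the middle of the orbit segment from `x` to `τ x` is a fixed point of `τ`
(`m` even) or a point `y` with `f y = τ y` (`m` odd). -/
theorem not_orbitRel_reverse {f τ : α → α} (hτ : Involutive τ) (hfix : ∀ x, τ x ≠ x)
    (hrev : ∀ x, f (τ (f x)) = τ x) (hne : ∀ x, f x ≠ τ x) (x : α) : ¬ OrbitRel f x (τ x) := by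
  have hinj : Injective f := fun a c h => by
    rw [← hτ a, ← hτ c, ← hrev a, ← hrev c, h]
  have key : ∀ (z : α) (m : ℕ), f^[m] z ≠ τ z := by
    intro z m hm
    obtain ⟨j, rfl | rfl⟩ := Nat.even_or_odd' m
    · refine hfix (f^[j] z) (hinj.iterate j ?_)
      rw [OrbitRel.iterate_reverse hrev, ← iterate_add_apply, ← two_mul, hm]
    · have h : τ (f^[j + 1] z) = f^[j] z := by
        refine hinj.iterate (j + 1) ?_
        rw [OrbitRel.iterate_reverse hrev, ← iterate_add_apply, ← hm]
        ring_nf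
      refine hne (f^[j] z) ?_
      rw [← iterate_succ_apply' f j z, ← h, hτ]
  intro h
  obtain ⟨m, hm | hm⟩ := OrbitRel.exists_iterate_eq hinj h
  · exact key x m hm
  · exact key (τ x) m (by rw [hm, hτ])

end OrbitRel

section Counting

variable {α β γ : Type*}

variable {f : α → α} {ι : β → α} {ret : β → β}

theorem exists_iterate_eq_of_return (hret : ∀ b, ∃ m, f^[m] (ι b) = ι (ret b)) (k : ℕ) (b : β) :
    ∃ M, f^[M] (ι b) = ι (ret^[k] b) := by
  induction k with
  | zero => exact ⟨0, rfl⟩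
  | succ k ih =>
    obtain ⟨M, hM⟩ := ih
    obtain ⟨m, hm⟩ := hret (ret^[k] b)
    exact ⟨m + M, by rw [iterate_add_apply, hM, hm, iterate_succ_apply']⟩

theorem orbitRel_of_iterate_eq_of_firstReturn (hι : Injective ι)
    (hret : ∀ b, ∃ m, 0 < m ∧ f^[m] (ι b) = ι (ret b) ∧
      ∀ j, 0 < j → j < m → ∀ b', f^[j] (ι b) ≠ ι b')
    {k : ℕ} {b b' : β} (h : f^[k] (ι b) = ι b') : OrbitRel ret b b' := by
  induction k using Nat.strong_induction_on generalizing b with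
  | _ k ih =>
    obtain rfl | hk := Nat.eq_zero_or_pos k
    · exact hι h ▸ OrbitRel.refl ret b
    obtain ⟨m, hm₀, hm, hfirst⟩ := hret b
    have hmk : m ≤ k := by
      by_contra hc
      exact hfirst k hk (by omega) b' h
    have h' : f^[k - m] (ι (ret b)) = ι b' := by
      rw [← hm, ← iterate_add_apply, Nat.sub_add_cancel hmk, h]
    exact (OrbitRel.apply_right ret b).trans (ih (k - m) (by omega) h')

theorem numOrbits_eq_of_firstReturn (f : α → α) (ι : β → α) (hι : Injective ι) (ret : β → β)
    (hret : ∀ b, ∃ m, 0 < m ∧ f^[m] (ι b) = ι (ret b) ∧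
      ∀ j, 0 < j → j < m → ∀ b', f^[j] (ι b) ≠ ι b')
    (hmeet : ∀ x, ∃ k b, f^[k] x = ι b) :
    numOrbits f = numOrbits ret := by
  have hlift := exists_iterate_eq_of_return fun b =>
    let ⟨m, _, hm, _⟩ := hret b; ⟨m, hm⟩
  have hlift_rel : ∀ b b', OrbitRel ret b b' → OrbitRel f (ι b) (ι b') := by
    rintro b b' ⟨k, l, h⟩
    obtain ⟨M, hM⟩ := hlift k b
    obtain ⟨M', hM'⟩ := hlift l b'
    exact ⟨M, M', by rw [hM, hM', h]⟩
  let φ : Quotient (orbitSetoid ret) → Quotient (orbitSetoid f) :=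
    Quotient.map' ι hlift_rel
  have hφ : Bijective φ := by
    constructor
    · refine fun q q' => Quotient.inductionOn₂ q q' fun b b' h => Quotient.sound ?_
      obtain ⟨k, l, hkl⟩ : OrbitRel f (ι b) (ι b') := Quotient.exact h
      obtain ⟨p, c, hp⟩ := hmeet (f^[k] (ι b))
      have e₁ : f^[p + k] (ι b) = ι c := by rw [iterate_add_apply, hp]
      have e₂ : f^[p + l] (ι b') = ι c := by rw [iterate_add_apply, ← hkl, hp]
      exact (orbitRel_of_iterate_eq_of_firstReturn hι hret e₁).trans
        (orbitRel_of_iterate_eq_of_firstReturn hι hret e₂).symm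
    · refine fun q => Quotient.inductionOn q fun x => ?_
      obtain ⟨k, b, hk⟩ := hmeet x
      exact ⟨Quotient.mk _ b, Quotient.sound ⟨0, k, hk.symm⟩⟩
  exact (Nat.card_eq_of_bijective φ hφ).symm

theorem numOrbits_eq_add [Finite β] [Finite γ] (f : α → α) (f₁ : β → β) (f₂ : γ → γ)
    (ι₁ : β → α) (ι₂ : γ → α) (h₁ : Injective ι₁) (h₂ : Injective ι₂)
    (hdisj : ∀ b c, ι₁ b ≠ ι₂ c) (hcover : ∀ x, (∃ b, ι₁ b = x) ∨ (∃ c, ι₂ c = x))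
    (hc₁ : Semiconj ι₁ f₁ f) (hc₂ : Semiconj ι₂ f₂ f) :
    numOrbits f = numOrbits f₁ + numOrbits f₂ := by
  have hit₁ : ∀ k b, f^[k] (ι₁ b) = ι₁ (f₁^[k] b) := fun k b => ((hc₁.iterate_right k) b).symm
  have hit₂ : ∀ k c, f^[k] (ι₂ c) = ι₂ (f₂^[k] c) := fun k c => ((hc₂.iterate_right k) c).symm
  let φ : Quotient (orbitSetoid f₁) ⊕ Quotient (orbitSetoid f₂) → Quotient (orbitSetoid f) :=
    Sum.elim
      (Quotient.map' ι₁ fun _ _ ⟨k, l, h⟩ => ⟨k, l, by rw [hit₁, hit₁, h]⟩)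
      (Quotient.map' ι₂ fun _ _ ⟨k, l, h⟩ => ⟨k, l, by rw [hit₂, hit₂, h]⟩)
  have hφ : Bijective φ := by
    constructor
    · rintro (q | q) (q' | q') <;>
        refine Quotient.inductionOn₂ q q' fun x x' h => ?_ <;>
        obtain ⟨k, l, hkl⟩ := Quotient.exact h
      · rw [hit₁, hit₁] at hkl
        exact congrArg Sum.inl (Quotient.sound ⟨k, l, h₁ hkl⟩)
      · rw [hit₁, hit₂] at hkl
        exact absurd hkl (hdisj _ _)
      · rw [hit₂, hit₁] at hkl
        exact absurd hkl.symm (hdisj _ _)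
      · rw [hit₂, hit₂] at hkl
        exact congrArg Sum.inr (Quotient.sound ⟨k, l, h₂ hkl⟩)
    · refine fun q => Quotient.inductionOn q fun x => ?_
      rcases hcover x with ⟨b, rfl⟩ | ⟨c, rfl⟩
      · exact ⟨Sum.inl (Quotient.mk _ b), rfl⟩
      · exact ⟨Sum.inr (Quotient.mk _ c), rfl⟩
  rw [numOrbits, ← Nat.card_eq_of_bijective φ hφ, Nat.card_sum]
  rfl

end Counting

section Components

variable {V S : Type*}

variable (G : SimpleGraph V) {σ : V × Bool → V × Bool}

theorem reachable_of_orbitRel (hstep : ∀ x, G.Adj x.1 (σ x).1) {x y : V × Bool}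
    (h : OrbitRel σ x y) : G.Reachable x.1 y.1 := by
  have hit : ∀ (k : ℕ) x, G.Reachable x.1 (σ^[k] x).1 := by
    intro k
    induction k with
    | zero => exact fun x => .rfl
    | succ k ih =>
      intro x
      rw [iterate_succ_apply']
      exact (ih x).trans (hstep _).reachable
  obtain ⟨k, l, h⟩ := h
  exact (hit k x).trans (h ▸ (hit l y).symm)

theorem exists_orbitRel_of_reachable (hrev : ∀ x, σ (Prod.map id not (σ x)) = Prod.map id not x)
    (hadj : ∀ u v, G.Adj u v → ∃ s t, OrbitRel σ (u, s) (v, t)) {u v : V} (h : G.Reachable u v)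
    (s : Bool) : ∃ t, OrbitRel σ (u, s) (v, t) := by
  obtain ⟨p⟩ := h
  induction p generalizing s with
  | nil => exact ⟨s, .refl _ _⟩
  | @cons x y _ h _ ih =>
    obtain ⟨s₁, t₁, h₁⟩ := hadj _ _ h
    have h₁' : ∃ t, OrbitRel σ (x, s) (y, t) := by
      rcases Bool.eq_or_eq_not s s₁ with rfl | rfl
      exacts [⟨t₁, h₁⟩, ⟨!t₁, h₁.reverse hrev⟩]
    obtain ⟨t, h₁⟩ := h₁'
    obtain ⟨t', h₂⟩ := ih t
    exact ⟨t', h₁.trans h₂⟩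

/-- Each component carries exactly two orbits: the states over it are related up to reversing the
side, and `not_orbitRel_reverse` separates a state from its reverse. -/
theorem numOrbits_eq_two_mul_card_connectedComponent
    (hrev : ∀ x, σ (Prod.map id not (σ x)) = Prod.map id not x)
    (hne : ∀ x, σ x ≠ Prod.map id not x)
    (hstep : ∀ x, G.Adj x.1 (σ x).1)
    (hadj : ∀ u v, G.Adj u v → ∃ s t, OrbitRel σ (u, s) (v, t)) :
    numOrbits σ = 2 * Nat.card G.ConnectedComponent := by
  have hτ : Involutive (Prod.map id not : V × Bool → V × Bool) :=
    fun x => Prod.ext rfl (Bool.not_not _)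
  let e : G.ConnectedComponent × Bool → Quotient (orbitSetoid σ) :=
    fun p => Quotient.mk _ (p.1.out, p.2)
  have he : Bijective e := by
    constructor
    · rintro ⟨K, s⟩ ⟨K', s'⟩ h
      have h' : OrbitRel σ (K.out, s) (K'.out, s') := Quotient.exact h
      obtain rfl : K = K' := by
        rw [← K.out_eq, ← K'.out_eq]
        exact SimpleGraph.ConnectedComponent.sound (reachable_of_orbitRel G hstep h')
      rcases Bool.eq_or_eq_not s' s with rfl | rfl
      · rfl
      · exact absurd h' (not_orbitRel_reverse hτ (fun x h => by simpa using congrArg Prod.snd h)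
          hrev hne (K.out, s))
    · refine fun q => Quotient.inductionOn q fun ⟨v, s⟩ => ?_
      obtain ⟨t, h⟩ := exists_orbitRel_of_reachable G hrev hadj
        (SimpleGraph.ConnectedComponent.exact (G.connectedComponentMk v).out_eq.symm) s
      exact ⟨(G.connectedComponentMk v, t), Quotient.sound h.symm⟩
  rw [numOrbits, ← Nat.card_eq_of_bijective e he, Nat.card_prod, Nat.card_eq_fintype_card
    (α := Bool), Fintype.card_bool, mul_comm]

/-- `x₀` and `B x₀` lie in different orbits by `not_orbitRel_reverse`, and both `R` and `B` swap
the two orbits. -/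
theorem numOrbits_comp_of_involutive (R B : S → S) (hR : Involutive R) (hB : Involutive B)
    (hRfix : ∀ z, R z ≠ z) (hBfix : ∀ z, B z ≠ z)
    (htrans : ∀ (P : S → Prop) (x : S), P x → (∀ z, P z → P (R z) ∧ P (B z)) → ∀ y, P y)
    (x₀ : S) :
    numOrbits (fun z => R (B z)) = 2 := by
  set ρ : S → S := fun z => R (B z)
  have hrevB : ∀ z, ρ (B (ρ z)) = B z := fun z => by
    show R (B (B (R (B z)))) = B z
    rw [hB, hR]
  have hrevR : ∀ z, ρ (R (ρ z)) = R z := fun z => by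
    show R (B (R (R (B z)))) = R z
    rw [hR, hB]
  have hsep : ¬ OrbitRel ρ x₀ (B x₀) :=
    not_orbitRel_reverse hB hBfix hrevB (fun z => hRfix (B z)) x₀
  have hRB : OrbitRel ρ (R x₀) (B x₀) := ⟨0, 1, by simp [ρ, hB x₀]⟩
  have hcover : ∀ y, OrbitRel ρ y x₀ ∨ OrbitRel ρ y (B x₀) := by
    refine htrans _ x₀ (.inl (.refl _ _)) ?_
    rintro z (h | h)
    · exact ⟨.inr ((h.reverse hrevR).trans hRB), .inr (h.reverse hrevB)⟩
    · refine ⟨.inl ((h.reverse hrevR).trans (OrbitRel.apply_right ρ x₀).symm), .inl ?_⟩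
      simpa [hB x₀] using h.reverse hrevB
  let e : Bool → Quotient (orbitSetoid ρ) := fun s => Quotient.mk _ (cond s (B x₀) x₀)
  have he : Bijective e := by
    constructor
    · intro s t h
      cases s <;> cases t
      · rfl
      · exact absurd (Quotient.exact h) hsep
      · exact absurd (Quotient.exact h).symm hsep
      · rfl
    · refine fun q => Quotient.inductionOn q fun y => ?_
      rcases hcover y with h | h
      · exact ⟨false, Quotient.sound h.symm⟩
      · exact ⟨true, Quotient.sound h.symm⟩
  rw [numOrbits, ← Nat.card_eq_of_bijective e he, Nat.card_eq_fintype_card, Fintype.card_bool]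

end Components

/-- The red and blue perfect matchings `x ↦ r x`, `x ↦ b x` of a disjoint union of
colour-alternating cycles with vertex set `T`. -/
structure IsMatchingPair {α : Type*} (T : Finset α) (r b : α → α) : Prop where
  r_mem : ∀ x ∈ T, r x ∈ T
  r_r : ∀ x ∈ T, r (r x) = x
  r_ne : ∀ x ∈ T, r x ≠ x
  b_mem : ∀ x ∈ T, b x ∈ T
  b_b : ∀ x ∈ T, b (b x) = x
  b_ne : ∀ x ∈ T, b x ≠ x

namespace IsMatchingPair

variable {α : Type*} {T : Finset α} {r b : α → α}

theorem exists_mem_ne (hS : IsMatchingPair T r b) {t : α} (ht : t ∈ T) (w : α) :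
    ∃ u ∈ T, u ≠ w := by
  by_cases htw : t = w
  · exact ⟨r t, hS.r_mem t ht, htw ▸ hS.r_ne t ht⟩
  · exact ⟨t, ht, htw⟩

theorem subset (hS : IsMatchingPair T r b) {T' : Finset α} (hT'T : T' ⊆ T)
    (hT'cl : ∀ x ∈ T', r x ∈ T' ∧ b x ∈ T') : IsMatchingPair T' r b :=
  ⟨fun x hx => (hT'cl x hx).1, fun x hx => hS.r_r x (hT'T hx), fun x hx => hS.r_ne x (hT'T hx),
    fun x hx => (hT'cl x hx).2, fun x hx => hS.b_b x (hT'T hx), fun x hx => hS.b_ne x (hT'T hx)⟩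

theorem numOrbits_restrict_comp (hS : IsMatchingPair T r b)
    (hconn : ∀ (P : α → Prop) (x : α), x ∈ T → P x →
      (∀ z ∈ T, P z → P (r z) ∧ P (b z)) → ∀ y ∈ T, P y)
    (hT : T.Nonempty) (hrb : Set.MapsTo (fun z => r (b z)) T T) : numOrbits hrb.restrict = 2 := by
  obtain ⟨x₀, hx₀⟩ := hT
  exact numOrbits_comp_of_involutive (Set.MapsTo.restrict r T T hS.r_mem)
    (Set.MapsTo.restrict b T T hS.b_mem) (fun z => Subtype.ext (hS.r_r z z.2))
    (fun z => Subtype.ext (hS.b_b z z.2)) (fun z h => hS.r_ne z z.2 (congrArg Subtype.val h))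
    (fun z h => hS.b_ne z z.2 (congrArg Subtype.val h))
    (fun P x hx hP y => hconn (fun v => ∀ h : v ∈ T, P ⟨v, h⟩) x x.2 (fun _ => hx)
      (fun z hz h => ⟨fun _ => (hP ⟨z, hz⟩ (h hz)).1, fun _ => (hP ⟨z, hz⟩ (h hz)).2⟩) y y.2 y.2)
    ⟨x₀, hx₀⟩

end IsMatchingPair

/-- `sbtw a b c` for the circular order of `ℕ` induced by `<`. -/
def CycBtw (a b c : ℕ) : Prop := a < b ∧ b < c ∨ b < c ∧ c < a ∨ c < a ∧ a < b

theorem not_cycBtw_self_succ (a x : ℕ) : ¬ CycBtw a x (a + 1) := by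
  unfold CycBtw; omega

theorem not_cycBtw_two_mul_add {a c z ε δ : ℕ} (hε : ε ≤ 1) (hδ : δ ≤ 1) (hac : a ≠ c)
    (h : ¬ CycBtw a z c) (hz : z = a → δ ≤ ε) : ¬ CycBtw (2 * a + ε) (2 * z + δ) (2 * c) := by
  unfold CycBtw at *; omega

section CyclicOrder

variable {n : ℕ} {T : Finset (ZMod n)} {u v w : ZMod n}

/-- The first element of `T` after `w` in the cyclic order (junk value `w` if `T ⊆ {w}`). -/
noncomputable def cycNext (T : Finset (ZMod n)) (w : ZMod n) : ZMod n :=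
  if h : ∃ v ∈ T, v ≠ w then argminOn (fun v => (v - w).val) {v | v ∈ T ∧ v ≠ w} h else w

/-- The last element of `T` before `w` in the cyclic order (junk value `w` if `T ⊆ {w}`). -/
noncomputable def cycPrev (T : Finset (ZMod n)) (w : ZMod n) : ZMod n :=
  if h : ∃ v ∈ T, v ≠ w then argminOn (fun v => (w - v).val) {v | v ∈ T ∧ v ≠ w} h else w

theorem cycNext_mem_and_ne (hu : u ∈ T) (huw : u ≠ w) : cycNext T w ∈ T ∧ cycNext T w ≠ w := by
  rw [cycNext, dif_pos ⟨u, hu, huw⟩]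
  exact argminOn_mem (fun v => (v - w).val) {v | v ∈ T ∧ v ≠ w} _

theorem cycPrev_mem_and_ne (hu : u ∈ T) (huw : u ≠ w) : cycPrev T w ∈ T ∧ cycPrev T w ≠ w := by
  rw [cycPrev, dif_pos ⟨u, hu, huw⟩]
  exact argminOn_mem (fun v => (w - v).val) {v | v ∈ T ∧ v ≠ w} _

variable [NeZero n]

theorem ZMod.val_sub_add_val_cases (a b : ZMod n) :
    (a - b).val + b.val = a.val ∨ (a - b).val + b.val = a.val + n := by
  rcases lt_or_ge ((a - b).val + b.val) n with h | h
  · left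
    rw [← ZMod.val_add_of_lt h, sub_add_cancel]
  · right
    have := ZMod.val_add_of_le h
    rw [sub_add_cancel] at this
    have := (a - b).val_lt
    omega

theorem cycBtw_val_iff_sub_left (w v u : ZMod n) :
    CycBtw w.val v.val u.val ↔ 0 < (v - w).val ∧ (v - w).val < (u - w).val := by
  have := ZMod.val_sub_add_val_cases v w
  have := ZMod.val_sub_add_val_cases u w
  have := (v - w).val_lt
  have := (u - w).val_lt
  have := v.val_lt
  have := u.val_lt
  have := w.val_lt
  unfold CycBtw
  omega

theorem cycBtw_val_iff_sub_right (u v w : ZMod n) :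
    CycBtw u.val v.val w.val ↔ 0 < (w - v).val ∧ (w - v).val < (w - u).val := by
  have := ZMod.val_sub_add_val_cases w v
  have := ZMod.val_sub_add_val_cases w u
  have := (w - v).val_lt
  have := (w - u).val_lt
  have := v.val_lt
  have := u.val_lt
  have := w.val_lt
  unfold CycBtw
  omega

theorem not_cycBtw_cycNext (hv : v ∈ T) : ¬ CycBtw w.val v.val (cycNext T w).val := by
  intro h
  have hvw : v ≠ w := by rintro rfl; unfold CycBtw at h; omega
  have hle : (cycNext T w - w).val ≤ (v - w).val := by
    rw [cycNext, dif_pos ⟨v, hv, hvw⟩]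
    exact argminOn_le (fun v => (v - w).val) {v | v ∈ T ∧ v ≠ w} ⟨hv, hvw⟩
  have := (cycBtw_val_iff_sub_left _ _ _).mp h
  omega

theorem not_cycBtw_cycPrev (hv : v ∈ T) : ¬ CycBtw (cycPrev T w).val v.val w.val := by
  intro h
  have hvw : v ≠ w := by rintro rfl; unfold CycBtw at h; omega
  have hle : (w - cycPrev T w).val ≤ (w - v).val := by
    rw [cycPrev, dif_pos ⟨v, hv, hvw⟩]
    exact argminOn_le (fun v => (w - v).val) {v | v ∈ T ∧ v ≠ w} ⟨hv, hvw⟩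
  have := (cycBtw_val_iff_sub_right _ _ _).mp h
  omega

theorem cycNext_eq (hu : u ∈ T) (huw : u ≠ w) (h : ∀ v ∈ T, ¬ CycBtw w.val v.val u.val) :
    cycNext T w = u := by
  obtain ⟨hmem, hne⟩ := cycNext_mem_and_ne hu huw
  by_contra hxu
  have hval : (cycNext T w - w).val ≠ (u - w).val := fun hv =>
    hxu (sub_left_inj.mp (ZMod.val_injective n hv))
  have h₁ := not_cycBtw_cycNext (w := w) hu
  have h₂ := h _ hmem
  rw [cycBtw_val_iff_sub_left] at h₁ h₂
  have := (ZMod.val_pos (a := cycNext T w - w)).mpr (sub_ne_zero.mpr hne)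
  have := (ZMod.val_pos (a := u - w)).mpr (sub_ne_zero.mpr huw)
  omega

theorem cycPrev_eq (hu : u ∈ T) (huw : u ≠ w) (h : ∀ v ∈ T, ¬ CycBtw u.val v.val w.val) :
    cycPrev T w = u := by
  obtain ⟨hmem, hne⟩ := cycPrev_mem_and_ne hu huw
  by_contra hxu
  have hval : (w - cycPrev T w).val ≠ (w - u).val := fun hv =>
    hxu (sub_right_inj.mp (ZMod.val_injective n hv))
  have h₁ := not_cycBtw_cycPrev (w := w) hu
  have h₂ := h _ hmem
  rw [cycBtw_val_iff_sub_right] at h₁ h₂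
  have := (ZMod.val_pos (a := w - cycPrev T w)).mpr (sub_ne_zero.mpr hne.symm)
  have := (ZMod.val_pos (a := w - u)).mpr (sub_ne_zero.mpr huw.symm)
  omega

theorem add_notMem_of_lt_cycNext {k : ℕ} (hk₀ : 0 < k) (hk : k < (cycNext T w - w).val) :
    w + k ∉ T := by
  intro hmem
  have hkn : ((k : ZMod n)).val = k := ZMod.val_cast_of_lt (hk.trans (ZMod.val_lt _))
  refine not_cycBtw_cycNext (w := w) hmem ((cycBtw_val_iff_sub_left _ _ _).mpr ?_)
  rw [add_sub_cancel_left, hkn]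
  exact ⟨hk₀, hk⟩

theorem sub_notMem_of_lt_cycPrev {k : ℕ} (hk₀ : 0 < k) (hk : k < (w - cycPrev T w).val) :
    w - k ∉ T := by
  intro hmem
  have hkn : ((k : ZMod n)).val = k := ZMod.val_cast_of_lt (hk.trans (ZMod.val_lt _))
  refine not_cycBtw_cycPrev (w := w) hmem ((cycBtw_val_iff_sub_right _ _ _).mpr ?_)
  rw [sub_sub_cancel, hkn]
  exact ⟨hk₀, hk⟩

end CyclicOrder

section TwoFactor

variable {n : ℕ} (T : Finset (ZMod n)) (r b : ZMod n → ZMod n)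

/-- Walking along `F(S)`: the state `(w, false)` is the vertex `w` entered from below (from `w - 1`,
or along the red edge from `r (w - 1) + 1`), `(w, true)` is `w` entered from above; the walk
leaves `w` on the other side. -/
def fsSucc : ZMod n × Bool → ZMod n × Bool
  | (w, false) => if w ∈ T then (b w, true) else (w + 1, false)
  | (w, true) => if w - 1 ∈ T then (r (w - 1) + 1, false) else (w - 1, true)

/-- The first return of the walk from `(t + 1, false)` to a state `(t' + 1, false)` with `t' ∈ T`:
walk up to the next vertex of `T`, cross its blue edge, walk down to the previous vertex `p` of `T`,
and cross the red edge at `p + 1`. -/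
noncomputable def fsReturn (t : ZMod n) : ZMod n := r (cycPrev T (b (cycNext T t)))

variable {T r b} {w : ZMod n}

theorem fsSucc_false_of_mem (h : w ∈ T) : fsSucc T r b (w, false) = (b w, true) := if_pos h

theorem fsSucc_false_of_notMem (h : w ∉ T) : fsSucc T r b (w, false) = (w + 1, false) := if_neg h

theorem fsSucc_true_of_mem (h : w - 1 ∈ T) : fsSucc T r b (w, true) = (r (w - 1) + 1, false) :=
  if_pos h

theorem fsSucc_true_of_notMem (h : w - 1 ∉ T) : fsSucc T r b (w, true) = (w - 1, true) := if_neg h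

theorem fsSucc_iterate_false {k : ℕ} (hk : ∀ i < k, w + i ∉ T) :
    (fsSucc T r b)^[k] (w, false) = (w + k, false) := by
  induction k with
  | zero => simp
  | succ k ih =>
    rw [iterate_succ_apply', ih fun i hi => hk i (by omega),
      fsSucc_false_of_notMem (hk k k.lt_succ_self)]
    push_cast
    ring_nf

theorem fsSucc_iterate_true {k : ℕ} (hk : ∀ i < k, w - i - 1 ∉ T) :
    (fsSucc T r b)^[k] (w, true) = (w - k, true) := by
  induction k with
  | zero => simp
  | succ k ih =>
    rw [iterate_succ_apply', ih fun i hi => hk i (by omega),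
      fsSucc_true_of_notMem (hk k k.lt_succ_self)]
    push_cast
    ring_nf

variable [NeZero n]

theorem fsSucc_iterate_up_of_lt {t : ZMod n} {j : ℕ} (hj : j < (cycNext T t - t).val) :
    (fsSucc T r b)^[j] (t + 1, false) = (t + 1 + j, false) :=
  fsSucc_iterate_false fun i hi => by
    have := add_notMem_of_lt_cycNext (T := T) (w := t) (k := i + 1) (by omega) (by omega)
    push_cast at this
    rwa [add_assoc, add_comm 1]

theorem fsSucc_iterate_up {t u : ZMod n} (hu : u ∈ T) (hut : u ≠ t) :
    (fsSucc T r b)^[(cycNext T t - t).val] (t + 1, false) = (b (cycNext T t), true) := by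
  obtain ⟨hmem, hne⟩ := cycNext_mem_and_ne hu hut
  have hpos := (ZMod.val_pos (a := cycNext T t - t)).mpr (sub_ne_zero.mpr hne)
  obtain ⟨d, hd⟩ := Nat.exists_eq_succ_of_ne_zero hpos.ne'
  rw [hd, iterate_succ_apply', fsSucc_iterate_up_of_lt (by omega)]
  have : t + 1 + (d : ZMod n) = cycNext T t := by
    rw [add_assoc, add_comm 1, ← Nat.cast_succ, ← hd, ZMod.natCast_zmod_val, add_sub_cancel]
  rw [this, fsSucc_false_of_mem hmem]

theorem fsSucc_iterate_down_of_lt {j : ℕ} (hj : j < (w - cycPrev T w).val) :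
    (fsSucc T r b)^[j] (w, true) = (w - j, true) :=
  fsSucc_iterate_true fun i hi => by
    have := sub_notMem_of_lt_cycPrev (T := T) (w := w) (k := i + 1) (by omega) (by omega)
    push_cast at this
    rwa [sub_add_eq_sub_sub] at this

theorem fsSucc_iterate_down {u : ZMod n} (hu : u ∈ T) (huw : u ≠ w) :
    (fsSucc T r b)^[(w - cycPrev T w).val] (w, true) = (r (cycPrev T w) + 1, false) := by
  obtain ⟨hmem, hne⟩ := cycPrev_mem_and_ne hu huw
  have hpos := (ZMod.val_pos (a := w - cycPrev T w)).mpr (sub_ne_zero.mpr hne.symm)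
  obtain ⟨e, he⟩ := Nat.exists_eq_succ_of_ne_zero hpos.ne'
  have hp : w - (e : ZMod n) - 1 = cycPrev T w := by
    rw [sub_sub, ← Nat.cast_succ, ← he, ZMod.natCast_zmod_val, sub_sub_cancel]
  rw [he, iterate_succ_apply', fsSucc_iterate_down_of_lt (by omega),
    fsSucc_true_of_mem (hp ▸ hmem), hp]

end TwoFactor

section TwoFactorCount

variable {n : ℕ} {T : Finset (ZMod n)} {r b : ZMod n → ZMod n}

theorem mapsTo_fsReturn (hS : IsMatchingPair T r b) : Set.MapsTo (fsReturn T r b) T T := by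
  intro t ht
  obtain ⟨v, hv, hvw⟩ := hS.exists_mem_ne ht (b (cycNext T t))
  exact hS.r_mem _ (cycPrev_mem_and_ne hv hvw).1

theorem fsSucc_reverse (hS : IsMatchingPair T r b) (x : ZMod n × Bool) :
    fsSucc T r b (Prod.map id not (fsSucc T r b x)) = Prod.map id not x := by
  obtain ⟨w, _ | _⟩ := x
  · by_cases hw : w ∈ T
    · rw [fsSucc_false_of_mem hw]
      exact (fsSucc_false_of_mem (hS.b_mem w hw)).trans (by rw [hS.b_b w hw]; rfl)
    · rw [fsSucc_false_of_notMem hw]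
      exact (fsSucc_true_of_notMem (by simpa using hw)).trans (by simp)
  · by_cases hw : w - 1 ∈ T
    · rw [fsSucc_true_of_mem hw]
      refine (fsSucc_true_of_mem (by simpa using hS.r_mem _ hw)).trans ?_
      simp [hS.r_r _ hw]
    · rw [fsSucc_true_of_notMem hw]
      exact (fsSucc_false_of_notMem hw).trans (by simp)

theorem fsSucc_ne_reverse (hS : IsMatchingPair T r b) (x : ZMod n × Bool) :
    fsSucc T r b x ≠ Prod.map id not x := by
  obtain ⟨w, _ | _⟩ := x
  · by_cases hw : w ∈ T
    · simpa [fsSucc_false_of_mem hw] using hS.b_ne w hw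
    · simp [fsSucc_false_of_notMem hw]
  · by_cases hw : w - 1 ∈ T
    · rw [fsSucc_true_of_mem hw]
      intro h
      exact hS.r_ne _ hw (by simpa [eq_sub_iff_add_eq] using congrArg Prod.fst h)
    · simp [fsSucc_true_of_notMem hw]

theorem FSgraph_adj_fsSucc [Nontrivial (ZMod n)] (hS : IsMatchingPair T r b)
    (x : ZMod n × Bool) : (FSgraph n T r b).Adj x.1 (fsSucc T r b x).1 := by
  have hne := fsSucc_ne_reverse hS x
  obtain ⟨w, _ | _⟩ := x
  · refine (SimpleGraph.fromRel_adj _ _ _).mpr ⟨?_, .inl ?_⟩ <;> by_cases hw : w ∈ T <;>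
      simp_all [fsSucc_false_of_mem, fsSucc_false_of_notMem, eq_comm (a := w)]
  · refine (SimpleGraph.fromRel_adj _ _ _).mpr ⟨?_, ?_⟩ <;> by_cases hw : w - 1 ∈ T
    · intro h
      exact hS.r_ne _ hw (by simpa [fsSucc_true_of_mem hw, eq_sub_iff_add_eq] using h.symm)
    · simp [fsSucc_true_of_notMem hw, eq_sub_iff_add_eq]
    · simp [fsSucc_true_of_mem hw, hw]
    · simp [fsSucc_true_of_notMem hw, hw]

theorem exists_orbitRel_of_FSgraph_adj {u v : ZMod n} (h : (FSgraph n T r b).Adj u v) :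
    ∃ s t, OrbitRel (fsSucc T r b) (u, s) (v, t) := by
  have step : ∀ x y : ZMod n, ((y = x + 1 ∧ x ∉ T) ∨ (x - 1 ∈ T ∧ y = r (x - 1) + 1) ∨
      (x ∈ T ∧ y = b x)) → ∃ s t, OrbitRel (fsSucc T r b) (x, s) (y, t) := by
    rintro x y (⟨rfl, hx⟩ | ⟨hx, rfl⟩ | ⟨hx, rfl⟩)
    · exact ⟨false, false, 1, 0, fsSucc_false_of_notMem (r := r) (b := b) hx⟩
    · exact ⟨true, false, 1, 0, fsSucc_true_of_mem (b := b) hx⟩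
    · exact ⟨false, true, 1, 0, fsSucc_false_of_mem (r := r) hx⟩
  rcases ((SimpleGraph.fromRel_adj _ _ _).mp h).2 with h | h
  · exact step u v h
  · obtain ⟨s, t, h⟩ := step v u h
    exact ⟨t, s, h.symm⟩

variable [NeZero n]

theorem fsSucc_firstReturn (hS : IsMatchingPair T r b) {t : ZMod n} (ht : t ∈ T) :
    ∃ m, 0 < m ∧ (fsSucc T r b)^[m] (t + 1, false) = (fsReturn T r b t + 1, false) ∧
      ∀ j, 0 < j → j < m → ∀ u ∈ T, (fsSucc T r b)^[j] (t + 1, false) ≠ (u + 1, false) := by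
  set d := (cycNext T t - t).val
  obtain ⟨u, hu, hut⟩ := hS.exists_mem_ne ht t
  obtain ⟨v, hv, hvw⟩ := hS.exists_mem_ne ht (b (cycNext T t))
  have hup := fsSucc_iterate_up (r := r) (b := b) hu hut
  have hd : 0 < d := ZMod.val_pos.mpr (sub_ne_zero.mpr (cycNext_mem_and_ne hu hut).2)
  refine ⟨(b (cycNext T t) - cycPrev T (b (cycNext T t))).val + d, by omega, ?_,
    fun j hj₀ hjm u hu h => ?_⟩
  · rw [iterate_add_apply, hup, fsSucc_iterate_down hv hvw]
    rfl
  rcases lt_or_ge j d with hjd | hjd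
  · rw [fsSucc_iterate_up_of_lt hjd, Prod.mk.injEq, add_assoc, add_comm 1, ← add_assoc,
      add_left_inj] at h
    exact add_notMem_of_lt_cycNext hj₀ hjd (h.1 ▸ hu)
  · obtain ⟨i, rfl⟩ := Nat.exists_eq_add_of_le' hjd
    rw [iterate_add_apply, hup, fsSucc_iterate_down_of_lt (by omega)] at h
    exact absurd (congrArg Prod.snd h) (by simp)

theorem fsSucc_exists_iterate_eq (hS : IsMatchingPair T r b) (hT : T.Nonempty)
    (x : ZMod n × Bool) : ∃ k, ∃ u ∈ T, (fsSucc T r b)^[k] x = (u + 1, false) := by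
  obtain ⟨t, ht⟩ := hT
  have hdown : ∀ w, ∃ k, ∃ u ∈ T, (fsSucc T r b)^[k] (w, true) = (u + 1, false) := by
    intro w
    obtain ⟨v, hv, hvw⟩ := hS.exists_mem_ne ht w
    exact ⟨_, _, hS.r_mem _ (cycPrev_mem_and_ne hv hvw).1, fsSucc_iterate_down hv hvw⟩
  obtain ⟨w, _ | _⟩ := x
  · obtain ⟨v, hv, hvw⟩ := hS.exists_mem_ne ht (w - 1)
    obtain ⟨k, u, hu, hk⟩ := hdown (b (cycNext T (w - 1)))
    refine ⟨k + (cycNext T (w - 1) - (w - 1)).val, u, hu, ?_⟩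
    have hup := fsSucc_iterate_up (r := r) (b := b) hv hvw
    rw [sub_add_cancel] at hup
    rw [iterate_add_apply, hup, hk]
  · exact hdown w

theorem numOrbits_fsReturn (hS : IsMatchingPair T r b) (hT : T.Nonempty) :
    numOrbits (mapsTo_fsReturn hS).restrict =
      2 * Nat.card (FSgraph n T r b).ConnectedComponent := by
  obtain ⟨t, ht⟩ := hT
  have : Nontrivial (ZMod n) := nontrivial_of_ne _ _ (hS.r_ne t ht)
  rw [← numOrbits_eq_two_mul_card_connectedComponent _ (fsSucc_reverse hS)
    (fsSucc_ne_reverse hS) (FSgraph_adj_fsSucc hS) fun _ _ => exists_orbitRel_of_FSgraph_adj]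
  refine (numOrbits_eq_of_firstReturn _ (fun a : (T : Set (ZMod n)) => ((a : ZMod n) + 1, false))
    (fun a a' h => by simpa using h) _ (fun a => ?_) fun x => ?_).symm
  · obtain ⟨m, hm₀, hm, hfirst⟩ := fsSucc_firstReturn hS a.2
    exact ⟨m, hm₀, hm, fun j hj₀ hjm a' => hfirst j hj₀ hjm a' a'.2⟩
  · obtain ⟨k, u, hu, hk⟩ := fsSucc_exists_iterate_eq hS ⟨t, ht⟩ x
    exact ⟨k, ⟨u, hu⟩, hk⟩

end TwoFactorCount

section Transport

variable {α β : Type*} [Nonempty α] {e : α → β} {Q : Finset α}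

noncomputable def transport (e : α → β) (Q : Finset α) (φ : α → α) : β → β :=
  fun y => e (φ (invFunOn e Q y))

theorem transport_apply (he : Set.InjOn e Q) (φ : α → α) {p : α} (hp : p ∈ Q) :
    transport e Q φ (e p) = e (φ p) := by
  rw [transport, he.leftInvOn_invFunOn hp]

theorem mem_image_and_transport [DecidableEq β] (he : Set.InjOn e Q) (φ : α → α)
    (P : β → β → Prop) (y : β) :
    (y ∈ Q.image e ∧ P y (transport e Q φ y)) ↔ ∃ p ∈ Q, y = e p ∧ P (e p) (e (φ p)) := by
  constructor
  · rintro ⟨hy, hP⟩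
    obtain ⟨p, hp, rfl⟩ := Finset.mem_image.mp hy
    exact ⟨p, hp, rfl, transport_apply he φ hp ▸ hP⟩
  · rintro ⟨p, hp, rfl, hP⟩
    exact ⟨Finset.mem_image_of_mem e hp, (transport_apply he φ hp).symm ▸ hP⟩

theorem IsMatchingPair.image [DecidableEq β] {r b : α → α} (h : IsMatchingPair Q r b)
    (he : Set.InjOn e Q) : IsMatchingPair (Q.image e) (transport e Q r) (transport e Q b) := by
  have transported : ∀ {φ : α → α}, (∀ x ∈ Q, φ x ∈ Q) → (∀ x ∈ Q, φ (φ x) = x) →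
      (∀ x ∈ Q, φ x ≠ x) → (∀ y ∈ Q.image e, transport e Q φ y ∈ Q.image e) ∧
      (∀ y ∈ Q.image e, transport e Q φ (transport e Q φ y) = y) ∧
      (∀ y ∈ Q.image e, transport e Q φ y ≠ y) := by
    intro φ hmem hinv hne
    refine ⟨?_, ?_, ?_⟩ <;> intro y hy <;> obtain ⟨p, hp, rfl⟩ := Finset.mem_image.mp hy <;>
      rw [transport_apply he φ hp]
    · exact Finset.mem_image_of_mem e (hmem p hp)
    · rw [transport_apply he φ (hmem p hp), hinv p hp]
    · exact fun h => hne p hp (he (hmem p hp) hp h)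
  obtain ⟨hr₁, hr₂, hr₃⟩ := transported h.r_mem h.r_r h.r_ne
  obtain ⟨hb₁, hb₂, hb₃⟩ := transported h.b_mem h.b_b h.b_ne
  exact ⟨hr₁, hr₂, hr₃, hb₁, hb₂, hb₃⟩

end Transport

section KeyedEmbedding

variable {n : ℕ} {α : Type*} {Q : Finset α} {e : α → ZMod n} {key : α → ℕ} {p q v : α}

def KeyMonoOn (Q : Finset α) (e : α → ZMod n) (key : α → ℕ) : Prop :=
  ∀ p ∈ Q, ∀ q ∈ Q, key p < key q → (e p).val < (e q).val

namespace KeyMonoOn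

theorem val_lt_iff (hm : KeyMonoOn Q e key) (hkey : Injective key) (hp : p ∈ Q) (hq : q ∈ Q) :
    (e p).val < (e q).val ↔ key p < key q := by
  refine ⟨fun h => ?_, hm p hp q hq⟩
  rcases lt_trichotomy (key p) (key q) with hlt | heq | hgt
  · exact hlt
  · exact absurd h (hkey heq ▸ lt_irrefl _)
  · exact absurd (hm q hq p hp hgt) h.not_gt

theorem injOn (hm : KeyMonoOn Q e key) (hkey : Injective key) : Set.InjOn e Q := by
  intro p hp q hq h
  by_contra hpq
  rcases lt_or_gt_of_ne (hkey.ne hpq) with hlt | hlt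
  · exact (hm p hp q hq hlt).ne (congrArg ZMod.val h)
  · exact (hm q hq p hp hlt).ne (congrArg ZMod.val h).symm

theorem cycBtw_iff (hm : KeyMonoOn Q e key) (hkey : Injective key) (hp : p ∈ Q) (hv : v ∈ Q)
    (hq : q ∈ Q) : CycBtw (e p).val (e v).val (e q).val ↔ CycBtw (key p) (key v) (key q) := by
  simp only [CycBtw, hm.val_lt_iff hkey hp hv, hm.val_lt_iff hkey hv hq,
    hm.val_lt_iff hkey hq hp]

variable [NeZero n]

theorem cycNext_image (hm : KeyMonoOn Q e key) (hkey : Injective key) (hp : p ∈ Q) (hq : q ∈ Q)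
    (hpq : p ≠ q) (h : ∀ v ∈ Q, ¬ CycBtw (key p) (key v) (key q)) :
    cycNext (Q.image e) (e p) = e q := by
  refine cycNext_eq (Finset.mem_image_of_mem e hq) (fun he => hpq (hm.injOn hkey hp hq he.symm))
    fun y hy => ?_
  obtain ⟨v, hv, rfl⟩ := Finset.mem_image.mp hy
  rw [hm.cycBtw_iff hkey hp hv hq]
  exact h v hv

theorem cycPrev_image (hm : KeyMonoOn Q e key) (hkey : Injective key) (hp : p ∈ Q) (hq : q ∈ Q)
    (hpq : p ≠ q) (h : ∀ v ∈ Q, ¬ CycBtw (key q) (key v) (key p)) :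
    cycPrev (Q.image e) (e p) = e q := by
  refine cycPrev_eq (Finset.mem_image_of_mem e hq) (fun he => hpq (hm.injOn hkey hp hq he.symm))
    fun y hy => ?_
  obtain ⟨v, hv, rfl⟩ := Finset.mem_image.mp hy
  rw [hm.cycBtw_iff hkey hq hv hp]
  exact h v hv

end KeyMonoOn

end KeyedEmbedding

section GoingUp

variable {n : ℕ} {T T' : Finset (ZMod n)} {r b g g' : ZMod n → ZMod n}

/-- The vertices of `U(S, C)`: `(s, false)` stands for `s ∈ T` and `(s, true)` for the new vertex
`s_{i+1/2}`, `s ∈ T'`. `upKey` lists them in the order of `U(S, C)`, and `upEmb` places them in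
`A` via `g` and `g'`. -/
def upVerts (T T' : Finset (ZMod n)) : Finset (ZMod n × Bool) := T ×ˢ {false} ∪ T' ×ˢ {true}

def upEmb (g g' : ZMod n → ZMod n) (p : ZMod n × Bool) : ZMod n := cond p.2 (g' p.1) (g p.1)

def upKey (p : ZMod n × Bool) : ℕ := 2 * p.1.val + p.2.toNat

noncomputable def upSet (T T' : Finset (ZMod n)) (g g' : ZMod n → ZMod n) : Finset (ZMod n) :=
  (upVerts T T').image (upEmb g g')

noncomputable def upMatch (T T' : Finset (ZMod n)) (g g' φ : ZMod n → ZMod n) :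
    ZMod n → ZMod n :=
  transport (upEmb g g') (upVerts T T') (Prod.map φ id)

theorem mem_upVerts {p : ZMod n × Bool} :
    p ∈ upVerts T T' ↔ p.1 ∈ T ∧ p.2 = false ∨ p.1 ∈ T' ∧ p.2 = true := by
  obtain ⟨s, _ | _⟩ := p <;> simp [upVerts]

theorem exists_mem_upVerts {P : ZMod n × Bool → Prop} :
    (∃ p ∈ upVerts T T', P p) ↔ (∃ s ∈ T, P (s, false)) ∨ ∃ s ∈ T', P (s, true) := by
  constructor
  · rintro ⟨⟨s, ε⟩, hp, hP⟩
    rcases mem_upVerts.mp hp with ⟨hs, rfl⟩ | ⟨hs, rfl⟩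
    exacts [.inl ⟨s, hs, hP⟩, .inr ⟨s, hs, hP⟩]
  · rintro (⟨s, hs, hP⟩ | ⟨s, hs, hP⟩)
    · exact ⟨(s, false), mem_upVerts.mpr (.inl ⟨hs, rfl⟩), hP⟩
    · exact ⟨(s, true), mem_upVerts.mpr (.inr ⟨hs, rfl⟩), hP⟩

theorem mem_upSet {p : ZMod n × Bool} (hp : p ∈ upVerts T T') : upEmb g g' p ∈ upSet T T' g g' :=
  Finset.mem_image_of_mem _ hp

theorem mk_false_mem_upVerts {s : ZMod n} (hs : s ∈ T) : (s, false) ∈ upVerts T T' :=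
  mem_upVerts.mpr (.inl ⟨hs, rfl⟩)

theorem mk_true_mem_upVerts {s : ZMod n} (hs : s ∈ T') : (s, true) ∈ upVerts T T' :=
  mem_upVerts.mpr (.inr ⟨hs, rfl⟩)

theorem mk_decide_mem_upVerts {s : ZMod n} (hs : s ∈ T) : (s, decide (s ∈ T')) ∈ upVerts T T' := by
  by_cases h : s ∈ T'
  · simpa [h] using mk_true_mem_upVerts h
  · simpa [h] using mk_false_mem_upVerts hs

theorem fst_mem_of_mem_upVerts (hT'T : T' ⊆ T) {p : ZMod n × Bool} (hp : p ∈ upVerts T T') :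
    p.1 ∈ T := by
  rcases mem_upVerts.mp hp with ⟨hs, -⟩ | ⟨hs, -⟩
  exacts [hs, hT'T hs]

theorem upKey_injective [NeZero n] : Injective (upKey (n := n)) := by
  rintro ⟨s, ε⟩ ⟨s', ε'⟩ h
  have hs : s.val = s'.val := by cases ε <;> cases ε' <;> simp [upKey] at h <;> omega
  obtain rfl := ZMod.val_injective n hs
  cases ε <;> cases ε' <;> simp_all [upKey]

theorem isMatchingPair_upVerts (hS : IsMatchingPair T r b) (hT'T : T' ⊆ T)
    (hT'cl : ∀ x ∈ T', r x ∈ T' ∧ b x ∈ T') :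
    IsMatchingPair (upVerts T T') (Prod.map r id) (Prod.map b id) := by
  have hT : ∀ p ∈ upVerts T T', p.1 ∈ T := fun p => fst_mem_of_mem_upVerts hT'T
  have hmem : ∀ {φ : ZMod n → ZMod n}, (∀ x ∈ T, φ x ∈ T) → (∀ x ∈ T', φ x ∈ T') →
      ∀ p ∈ upVerts T T', Prod.map φ id p ∈ upVerts T T' := fun hφ hφ' p hp => by
    rcases mem_upVerts.mp hp with ⟨hs, h⟩ | ⟨hs, h⟩
    exacts [mem_upVerts.mpr (.inl ⟨hφ _ hs, h⟩), mem_upVerts.mpr (.inr ⟨hφ' _ hs, h⟩)]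
  refine ⟨hmem hS.r_mem fun x hx => (hT'cl x hx).1, fun p hp => ?_, fun p hp => ?_,
    hmem hS.b_mem fun x hx => (hT'cl x hx).2, fun p hp => ?_, fun p hp => ?_⟩ <;>
    simp [Prod.ext_iff, hS.r_r _ (hT p hp), hS.b_b _ (hT p hp), hS.r_ne _ (hT p hp),
      hS.b_ne _ (hT p hp)]

theorem coe_upSet :
    (upSet T T' g g' : Set (ZMod n)) = g '' T ∪ g' '' T' := by
  ext x
  simp only [upSet, Finset.coe_image, Set.mem_image, Finset.mem_coe, exists_mem_upVerts,
    Set.mem_union, upEmb, cond_false, cond_true]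

theorem FUgraph_eq_FSgraph (hinj : Set.InjOn (upEmb g g') (upVerts T T')) :
    FUgraph n T T' r b g g' = FSgraph n (upSet T T' g g') (upMatch T T' g g' r)
      (upMatch T T' g g' b) := by
  unfold FUgraph FSgraph
  congr 1
  ext x y
  have hred : (x - 1 ∈ upSet T T' g g' ∧ y = upMatch T T' g g' r (x - 1) + 1) ↔ _ :=
    mem_image_and_transport hinj _ (fun _ c => y = c + 1) (x - 1)
  have hblue : (x ∈ upSet T T' g g' ∧ y = upMatch T T' g g' b x) ↔ _ :=
    mem_image_and_transport hinj _ (fun _ c => y = c) x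
  rw [hred, hblue, ← Finset.mem_coe, coe_upSet, exists_mem_upVerts, exists_mem_upVerts]
  simp only [upEmb, Prod.map_apply, id, cond_false, cond_true, sub_eq_iff_eq_add, or_assoc]
  exact or_congr_right (or_congr_right or_left_comm)

theorem toNat_le_of_mem_upVerts {p : ZMod n × Bool} (hp : p ∈ upVerts T T') :
    p.2.toNat ≤ (decide (p.1 ∈ T')).toNat := by
  rcases mem_upVerts.mp hp with ⟨-, h⟩ | ⟨hs, h⟩
  · simp [h]
  · simp [h, hs]

theorem not_cycBtw_upKey_true (s : ZMod n) (w : ZMod n × Bool) :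
    ¬ CycBtw (upKey (s, false)) (upKey w) (upKey (s, true)) :=
  not_cycBtw_self_succ _ _

variable [NeZero n]

theorem keyMonoOn_upEmb (hT'T : T' ⊆ T)
    (hord1 : ∀ x ∈ T, ∀ y ∈ T, x.val < y.val → (g x).val < (g y).val)
    (hord2 : ∀ x ∈ T', (g x).val < (g' x).val)
    (hord3 : ∀ x ∈ T', ∀ y ∈ T, x.val < y.val → (g' x).val < (g y).val) :
    KeyMonoOn (upVerts T T') (upEmb g g') upKey := by
  rintro ⟨s, ε⟩ hp ⟨s', ε'⟩ hq h
  rcases mem_upVerts.mp hp with ⟨hs, rfl⟩ | ⟨hs, rfl⟩ <;>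
    rcases mem_upVerts.mp hq with ⟨hs', rfl⟩ | ⟨hs', rfl⟩ <;>
    simp only [upKey, upEmb, Bool.toNat_false, Bool.toNat_true, cond_false, cond_true] at h ⊢
  · exact hord1 s hs s' hs' (by omega)
  · rcases eq_or_ne s s' with rfl | hne
    · exact hord2 s hs'
    · have : s.val ≠ s'.val := fun h => hne (ZMod.val_injective n h)
      exact (hord1 s hs s' (hT'T hs') (by omega)).trans (hord2 s' hs')
  · exact hord3 s hs s' hs' (by omega)
  · exact (hord3 s hs s' (hT'T hs') (by omega)).trans (hord2 s' hs')

theorem not_cycBtw_upKey (hT'T : T' ⊆ T) {a c : ZMod n} (hac : a ≠ c)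
    (h : ∀ z ∈ T, ¬ CycBtw a.val z.val c.val) {w : ZMod n × Bool} (hw : w ∈ upVerts T T') :
    ¬ CycBtw (upKey (a, decide (a ∈ T'))) (upKey w) (upKey (c, false)) := by
  simp only [upKey, Bool.toNat_false, add_zero]
  refine not_cycBtw_two_mul_add (Bool.toNat_le _) (Bool.toNat_le _)
    (fun h => hac (ZMod.val_injective n h)) (h _ (fst_mem_of_mem_upVerts hT'T hw)) fun hz => ?_
  rw [← ZMod.val_injective n hz]
  exact toNat_le_of_mem_upVerts hw

theorem fsReturn_upSet_top (hS : IsMatchingPair T r b) (hT'T : T' ⊆ T)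
    (hT'cl : ∀ x ∈ T', r x ∈ T' ∧ b x ∈ T')
    (hm : KeyMonoOn (upVerts T T') (upEmb g g') upKey) {t : ZMod n} (ht : t ∈ T) :
    fsReturn (upSet T T' g g') (upMatch T T' g g' r) (upMatch T T' g g' b)
        (upEmb g g' (t, decide (t ∈ T'))) =
      upEmb g g' (fsReturn T r b t, decide (fsReturn T r b t ∈ T')) := by
  have hinj := hm.injOn upKey_injective
  obtain ⟨hnext, hnext_ne⟩ := cycNext_mem_and_ne (hS.r_mem t ht) (hS.r_ne t ht)
  obtain ⟨v, hv, hvw⟩ := hS.exists_mem_ne ht (b (cycNext T t))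
  obtain ⟨hprev, hprev_ne⟩ := cycPrev_mem_and_ne hv hvw
  have hbnext := hS.b_mem _ hnext
  have hmem_iff : r (cycPrev T (b (cycNext T t))) ∈ T' ↔ cycPrev T (b (cycNext T t)) ∈ T' :=
    ⟨fun h => hS.r_r _ hprev ▸ (hT'cl _ h).1, fun h => (hT'cl _ h).1⟩
  simp only [fsReturn, upSet, upMatch]
  rw [hm.cycNext_image upKey_injective (mk_decide_mem_upVerts ht)
      (mk_false_mem_upVerts hnext) (fun h => hnext_ne (congrArg Prod.fst h).symm)
      fun w hw => not_cycBtw_upKey hT'T hnext_ne.symm (fun z hz => not_cycBtw_cycNext hz) hw,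
    transport_apply hinj _ (mk_false_mem_upVerts hnext)]
  rw [Prod.map_apply, id, hm.cycPrev_image upKey_injective (mk_false_mem_upVerts hbnext)
      (mk_decide_mem_upVerts hprev) (fun h => hprev_ne (congrArg Prod.fst h).symm)
      fun w hw => not_cycBtw_upKey hT'T hprev_ne (fun z hz => not_cycBtw_cycPrev hz) hw,
    transport_apply hinj _ (mk_decide_mem_upVerts hprev)]
  simp only [Prod.map_apply, id, hmem_iff]

theorem fsReturn_upSet_bottom (hT'T : T' ⊆ T)
    (hT'cl : ∀ x ∈ T', r x ∈ T' ∧ b x ∈ T')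
    (hm : KeyMonoOn (upVerts T T') (upEmb g g') upKey) {z : ZMod n} (hz : z ∈ T') :
    fsReturn (upSet T T' g g') (upMatch T T' g g' r) (upMatch T T' g g' b) (g z) = g (r (b z)) := by
  have hinj := hm.injOn upKey_injective
  have hbz := (hT'cl z hz).2
  simp only [fsReturn, upSet, upMatch]
  rw [show g z = upEmb g g' (z, false) from rfl,
    hm.cycNext_image upKey_injective (mk_false_mem_upVerts (hT'T hz)) (mk_true_mem_upVerts hz)
      (by simp) fun w _ => not_cycBtw_upKey_true z w,
    transport_apply hinj _ (mk_true_mem_upVerts hz), Prod.map_apply, id,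
    hm.cycPrev_image upKey_injective (mk_true_mem_upVerts hbz) (mk_false_mem_upVerts (hT'T hbz))
      (by simp) fun w _ => not_cycBtw_upKey_true _ w,
    transport_apply hinj _ (mk_false_mem_upVerts (hT'T hbz))]
  rfl

/-- The return map of `F(U)` acts on the vertices `upEmb (t, t ∈ T')` as the return map of `F(S)`
on `T`, and on the remaining vertices `g z`, `z ∈ T'`, as the rotation `r ∘ b` of `C`. -/
theorem numOrbits_fsReturn_upSet (hS : IsMatchingPair T r b) (hT'T : T' ⊆ T)
    (hT'cl : ∀ x ∈ T', r x ∈ T' ∧ b x ∈ T') (hm : KeyMonoOn (upVerts T T') (upEmb g g') upKey)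
    (hU : IsMatchingPair (upSet T T' g g') (upMatch T T' g g' r) (upMatch T T' g g' b))
    (hrb : Set.MapsTo (fun z => r (b z)) T' T') :
    numOrbits (mapsTo_fsReturn hU).restrict =
      numOrbits (mapsTo_fsReturn hS).restrict + numOrbits hrb.restrict := by
  have hinj := hm.injOn upKey_injective
  refine numOrbits_eq_add _ _ _
    (fun a => ⟨upEmb g g' (a, decide (a.1 ∈ T')), mem_upSet (mk_decide_mem_upVerts a.2)⟩)
    (fun z => ⟨g z, mem_upSet (mk_false_mem_upVerts (hT'T z.2))⟩) ?_ ?_ ?_ ?_ ?_ ?_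
  · rintro ⟨a, ha⟩ ⟨a', ha'⟩ h
    exact Subtype.ext (congrArg Prod.fst (hinj (mk_decide_mem_upVerts ha)
      (mk_decide_mem_upVerts ha') (congrArg Subtype.val h)))
  · rintro ⟨z, hz⟩ ⟨z', hz'⟩ h
    exact Subtype.ext (congrArg Prod.fst (hinj (mk_false_mem_upVerts (hT'T hz))
      (mk_false_mem_upVerts (hT'T hz')) (congrArg Subtype.val h)))
  · rintro ⟨a, ha⟩ ⟨z, hz⟩ h
    have := hinj (mk_decide_mem_upVerts ha) (mk_false_mem_upVerts (hT'T hz))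
      (congrArg Subtype.val h)
    simp only [Prod.mk.injEq, decide_eq_false_iff_not] at this
    exact this.2 (this.1 ▸ hz)
  · rintro ⟨y, hy⟩
    obtain ⟨⟨s, ε⟩, hp, rfl⟩ := Finset.mem_image.mp hy
    rcases mem_upVerts.mp hp with ⟨hs, rfl⟩ | ⟨hs, rfl⟩
    · by_cases hsT' : s ∈ T'
      · exact .inr ⟨⟨s, hsT'⟩, rfl⟩
      · exact .inl ⟨⟨s, hs⟩, by simp [hsT']⟩
    · exact .inl ⟨⟨s, hT'T hs⟩, by simp [hs]⟩
  · rintro ⟨t, ht⟩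
    exact Subtype.ext (fsReturn_upSet_top hS hT'T hT'cl hm ht).symm
  · rintro ⟨z, hz⟩
    exact Subtype.ext (fsReturn_upSet_bottom hT'T hT'cl hm hz).symm

end GoingUp

theorem stmt_10_general (n : ℕ) [NeZero n] (G : SimpleGraph (ZMod n))
    (T T' : Finset (ZMod n)) (r b g g' : ZMod n → ZMod n)
    -- `S` is a disjoint union of colour-alternating cycles in `A` …
    (hr : ∀ i ∈ T, r i ∈ T ∧ r (r i) = i ∧ (auxRed n G).Adj i (r i))
    (hb : ∀ i ∈ T, b i ∈ T ∧ b (b i) = i ∧ (auxBlue n G).Adj i (b i))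
    -- `C` is a cycle of `S` with vertex set `T'`
    (hT'T : T' ⊆ T) (hT'ne : T'.Nonempty)
    (hT'cl : ∀ x ∈ T', r x ∈ T' ∧ b x ∈ T')
    (hT'conn : ∀ (P : ZMod n → Prop) (x : ZMod n), x ∈ T' → P x →
      (∀ z ∈ T', P z → P (r z) ∧ P (b z)) → ∀ y ∈ T', P y)
    -- the embedding preserves the order of `U(S,C)`
    (hord1 : ∀ x ∈ T, ∀ y ∈ T, x.val < y.val → (g x).val < (g y).val)
    (hord2 : ∀ x ∈ T', (g x).val < (g' x).val)
    (hord3 : ∀ x ∈ T', ∀ y ∈ T, x.val < y.val → (g' x).val < (g y).val) :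
    Nat.card (FUgraph n T T' r b g g').ConnectedComponent
      = Nat.card (FSgraph n T r b).ConnectedComponent + 1 := by
  have hS : IsMatchingPair T r b := ⟨fun i hi => (hr i hi).1, fun i hi => (hr i hi).2.1,
    fun i hi => (hr i hi).2.2.ne', fun i hi => (hb i hi).1, fun i hi => (hb i hi).2.1,
    fun i hi => (hb i hi).2.2.ne'⟩
  have hC := hS.subset hT'T hT'cl
  have hm := keyMonoOn_upEmb hT'T hord1 hord2 hord3
  have hU : IsMatchingPair (upSet T T' g g') (upMatch T T' g g' r) (upMatch T T' g g' b) :=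
    (isMatchingPair_upVerts hS hT'T hT'cl).image (hm.injOn upKey_injective)
  have hrb : Set.MapsTo (fun z => r (b z)) T' T' := fun z hz => hC.r_mem _ (hC.b_mem z hz)
  obtain ⟨z₀, hz₀⟩ := hT'ne
  have hcount := numOrbits_fsReturn_upSet hS hT'T hT'cl hm hU hrb
  rw [numOrbits_fsReturn hS ⟨z₀, hT'T hz₀⟩,
    numOrbits_fsReturn hU ⟨_, mem_upSet (mk_true_mem_upVerts hz₀)⟩,
    hC.numOrbits_restrict_comp hT'conn ⟨z₀, hz₀⟩, ← FUgraph_eq_FSgraph (hm.injOn upKey_injective)]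
    at hcount
  omega

/-- **Going up.**  Let `S ⊆ A(G,H)` be a disjoint union of colour-alternating cycles
without neighbouring vertices (vertex set `T`, red/blue partners `r`, `b`), and let
`C` be a cycle of `S` (vertex set `T' ⊆ T`, nonempty, closed under `r` and `b` and
connected).  Let `U` be an ordered subgraph of `A` without neighbouring vertices
that is a going-up version `U(S,C)` of `S`: the vertices of `S` are re-embedded by
`g` and the new copies `s_{i+1/2}` of the vertices of `C` by `g'`, injectively,
preserving the order of `U(S,C)` (each `g' x` comes right after `g x`), with all
required red/blue edges present in `A`.  Then the 2-factor `F(U)` has exactly one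
more connected component than `F(S)`. -/
theorem stmt_10 (n : ℕ) [NeZero n] (hn : 3 ≤ n) (G : SimpleGraph (ZMod n))
    (hH : ∀ i : ZMod n, G.Adj i (i + 1))
    (T T' : Finset (ZMod n)) (r b g g' : ZMod n → ZMod n)
    -- `S` is a disjoint union of colour-alternating cycles in `A` …
    (hr : ∀ i ∈ T, r i ∈ T ∧ r (r i) = i ∧ (auxRed n G).Adj i (r i))
    (hb : ∀ i ∈ T, b i ∈ T ∧ b (b i) = i ∧ (auxBlue n G).Adj i (b i))
    -- … without neighbouring vertices
    (hnb : ∀ i ∈ T, i + 1 ∉ T)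
    -- `C` is a cycle of `S` with vertex set `T'`
    (hT'T : T' ⊆ T) (hT'ne : T'.Nonempty)
    (hT'cl : ∀ x ∈ T', r x ∈ T' ∧ b x ∈ T')
    (hT'conn : ∀ (P : ZMod n → Prop) (x : ZMod n), x ∈ T' → P x →
      (∀ z ∈ T', P z → P (r z) ∧ P (b z)) → ∀ y ∈ T', P y)
    -- `U` is embedded injectively via `g` (original vertices) and `g'` (copies)
    (hginj : ∀ x ∈ T, ∀ y ∈ T, g x = g y → x = y)
    (hg'inj : ∀ x ∈ T', ∀ y ∈ T', g' x = g' y → x = y)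
    (hgg' : ∀ x ∈ T, ∀ y ∈ T', g x ≠ g' y)
    -- the embedding preserves the order of `U(S,C)`
    (hord1 : ∀ x ∈ T, ∀ y ∈ T, x.val < y.val → (g x).val < (g y).val)
    (hord2 : ∀ x ∈ T', (g x).val < (g' x).val)
    (hord3 : ∀ x ∈ T', ∀ y ∈ T, x.val < y.val → (g' x).val < (g y).val)
    -- `U` is a subgraph of `A`: all its coloured edges are present in `A`
    (hUA : ∀ x ∈ T,
      (auxRed n G).Adj (g x) (g (r x)) ∧ (auxBlue n G).Adj (g x) (g (b x)))
    (hUA' : ∀ x ∈ T',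
      (auxRed n G).Adj (g' x) (g' (r x)) ∧ (auxBlue n G).Adj (g' x) (g' (b x)))
    -- `U` has no neighbouring vertices
    (hnbU : ∀ x : ZMod n,
      x ∈ g '' (T : Set (ZMod n)) ∪ g' '' (T' : Set (ZMod n)) →
      x + 1 ∉ g '' (T : Set (ZMod n)) ∪ g' '' (T' : Set (ZMod n))) :
    Nat.card (FUgraph n T T' r b g g').ConnectedComponent
      = Nat.card (FSgraph n T r b).ConnectedComponent + 1 :=
  stmt_10_general n G T T' r b g g' hr hb hT'T hT'ne hT'cl hT'conn hord1 hord2 hord3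
end

section
/- Let S ⊆ A be a disjoint union of colour-alternating cycles without neighbouring vertices, and let D be an ordered subgraph of A without neighbouring vertices that is a going-down version of S. Then the 2-factor F(D) of G has exactly one fewer connected component than F(S). -/
/-- The 2-factor `F(D)` of `G` corresponding to a going-down version `D = D(S, s_k)`
of `S` embedded in `A(G,H)`.  Here `S` has vertex set `T` and red/blue partners
`r`, `b`; the cycle `C` of `S` containing `s_k = k₀` has vertex set `T' ⊆ T`; the
original vertices are embedded by `g` and the two new copies `s_{i+1/3}`,
`s_{i+2/3}` of the vertices of `C` by `g1`, `g2`.  The coloured edges of `D` are: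
all original red edges; copies of the red/blue edges of `C` not incident to `s_k`;
original blue edges not incident to `s_k`; the rewired blue edges
`s_i s_{k+1/3}`, `s_{i+1/3} s_{k+2/3}`, `s_{i+2/3} s_k` (where `s_i s_k` is the blue
edge at `s_k`); and the extra red edges `s_{i+1/3} s_{k+2/3}`, `s_{i+2/3} s_{k+1/3}`
(where `s_i s_k` is the red edge at `s_k`).  `F(D)` consists of the Hamilton edges
avoiding `V(D)` plus the inner edges of `G` corresponding to the edges of `D`. -/
def FDgraph (n : ℕ) (T T' : Finset (ZMod n)) (r b g g1 g2 : ZMod n → ZMod n)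
    (k₀ : ZMod n) : SimpleGraph (ZMod n) :=
  SimpleGraph.fromRel (fun x y =>
    (y = x + 1 ∧ x ∉ g '' (T : Set (ZMod n)) ∪ g1 '' (T' : Set (ZMod n))
        ∪ g2 '' (T' : Set (ZMod n))) ∨
    (∃ s ∈ T, x = g s + 1 ∧ y = g (r s) + 1) ∨
    (∃ s ∈ T', s ≠ k₀ ∧ r s ≠ k₀ ∧
      ((x = g1 s + 1 ∧ y = g1 (r s) + 1) ∨ (x = g2 s + 1 ∧ y = g2 (r s) + 1))) ∨
    (x = g1 (r k₀) + 1 ∧ y = g2 k₀ + 1) ∨ (x = g2 (r k₀) + 1 ∧ y = g1 k₀ + 1) ∨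
    (∃ s ∈ T, s ≠ k₀ ∧ b s ≠ k₀ ∧ x = g s ∧ y = g (b s)) ∨
    (∃ s ∈ T', s ≠ k₀ ∧ b s ≠ k₀ ∧
      ((x = g1 s ∧ y = g1 (b s)) ∨ (x = g2 s ∧ y = g2 (b s)))) ∨
    (x = g (b k₀) ∧ y = g1 k₀) ∨ (x = g1 (b k₀) ∧ y = g2 k₀) ∨
    (x = g2 (b k₀) ∧ y = g k₀))

/-!
Delete from the 2-factor `F(S)` its blue and its red edge at `s_k`. As `v_k` and `v_{k+1}` lie on
different cycles of `F(S)`, the two edges lie on different cycles, so the cut graph still has the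
components of `F(S)`; let `X` and `Y` be those of `v_k` and `v_{k+1}`. Label a vertex of `F(D)` by
walking along `H` to the first vertex of `D`: an original vertex `s` contributes the component of
`s` (with `Y` renamed `X`), a copy `s_{i+1/3}` or `s_{i+2/3}` contributes `X`. Every edge of `F(D)`
preserves labels, and conversely vertices with equal labels are joined in `F(D)`: the cut graph's
edges lift to `F(D)`, and the copies of the cycle `C`, which stays connected after deleting an edge
or the vertex `s_k`, tie `X` and `Y` together. So the components of `F(D)` are those of `F(S)` with
`X` and `Y` merged.
-/

theorem Finset.even_card_of_involution {α : Type*} {s : Finset α} (f : α → α)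
    (hmem : ∀ a ∈ s, f a ∈ s) (hinv : ∀ a ∈ s, f (f a) = a) (hne : ∀ a ∈ s, f a ≠ a) :
    Even s.card := by
  rw [← ZMod.natCast_eq_zero_iff_even, Finset.card_eq_sum_ones, Nat.cast_sum, Nat.cast_one]
  exact Finset.sum_involution (fun a _ => f a) (fun _ _ => by decide) (fun a ha _ => hne a ha)
    hmem hinv

theorem Nat.card_compl_singleton_add_one {α : Type*} [Finite α] (a : α) :
    Nat.card ↑({a}ᶜ : Set α) + 1 = Nat.card α := by
  have : Nonempty α := ⟨a⟩
  rw [Nat.card_coe_set_eq, Set.ncard_compl, Set.ncard_singleton]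
  have := Nat.card_pos (α := α)
  omega

namespace SimpleGraph

variable {V W : Type*}

theorem reachable_fromRel_of_rel {R : V → V → Prop} {x y : V} (h : R x y) :
    (fromRel R).Reachable x y := by
  by_cases hxy : x = y
  · exact hxy ▸ Reachable.refl x
  · exact (fromRel_adj R x y |>.2 ⟨hxy, Or.inl h⟩).reachable

theorem fromRel_adj_elim {R P : V → V → Prop}
    (hP : ∀ x y, P x y → P y x) (hR : ∀ x y, R x y → P x y) {x y : V}
    (h : (fromRel R).Adj x y) : P x y :=
  ((fromRel_adj R x y).1 h).2.elim (hR x y) fun h' => hP y x (hR y x h')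

theorem Reachable.mem_of_adj_mem {G : SimpleGraph V} {S : Set V}
    (hS : ∀ x y, G.Adj x y → x ∈ S → y ∈ S) {u v : V} (h : G.Reachable u v) (hu : u ∈ S) :
    v ∈ S := by
  rw [reachable_iff_reflTransGen] at h
  induction h with
  | refl => exact hu
  | tail _ hadj ih => exact hS _ _ hadj ih

theorem Reachable.map_of_adj {G : SimpleGraph V} {G' : SimpleGraph W} (f : V → W)
    (hf : ∀ x y, G.Adj x y → G'.Reachable (f x) (f y)) {u v : V} (h : G.Reachable u v) :
    G'.Reachable (f u) (f v) := by
  rw [reachable_iff_reflTransGen] at h ⊢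
  exact Relation.ReflTransGen.lift' f
    (fun x y hxy => (reachable_iff_reflTransGen _ _).1 (hf x y hxy)) u v h

theorem Reachable.eq_of_adj {G : SimpleGraph V} (f : V → W) (hf : ∀ x y, G.Adj x y → f x = f y)
    {u v : V} (h : G.Reachable u v) : f u = f v :=
  reachable_bot.1 (h.map_of_adj f fun x y hxy => reachable_bot.2 (hf x y hxy))

theorem card_connectedComponent_eq_card_range (G : SimpleGraph V) (f : V → W)
    (hf : ∀ x y, f x = f y ↔ G.Reachable x y) :
    Nat.card G.ConnectedComponent = Nat.card (Set.range f) :=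
  Nat.card_congr ((Quot.congrRight fun x y => (hf x y).symm).trans
    (Setoid.quotientKerEquivRange f))

/-- Each vertex carries two half-edge slots; `ι` pairs up the present ones (those satisfying `P`)
into the edges of a multigraph whose connectivity is recorded by `H`. A component holds an even
number of slots and an even number of present ones, so a missing slot at `u` forces another
missing slot in the component of `u`. -/
theorem exists_absent_slot_reachable [Fintype V] (H : SimpleGraph V) (P : V × Bool → Prop)
    (ι : V × Bool → V × Bool) (hreach : ∀ d, P d → H.Reachable d.1 (ι d).1)
    (hP : ∀ d, P d → P (ι d)) (hinv : ∀ d, P d → ι (ι d) = d) (hne : ∀ d, P d → ι d ≠ d)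
    {u : V} {c : Bool} (hu : ¬ P (u, c)) : ∃ d ≠ (u, c), ¬ P d ∧ H.Reachable u d.1 := by
  classical
  by_contra! hcon
  set K := (Finset.univ.filter (H.Reachable u)) ×ˢ (Finset.univ : Finset Bool)
  have hpresent : Even (K.filter P).card := by
    refine Finset.even_card_of_involution ι (fun d hd => ?_)
      (fun d hd => hinv d (Finset.mem_filter.1 hd).2) (fun d hd => hne d (Finset.mem_filter.1 hd).2)
    simp only [K, Finset.mem_filter, Finset.mem_product, Finset.mem_univ, and_true,
      true_and] at hd ⊢
    exact ⟨hd.1.trans (hreach d hd.2), hP d hd.2⟩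
  have habsent : K.filter (¬ P ·) = {(u, c)} := by
    ext ⟨x, c'⟩
    simp only [K, Finset.mem_filter, Finset.mem_product, Finset.mem_univ, and_true,
      true_and, Finset.mem_singleton]
    refine ⟨fun ⟨hx, hP'⟩ => ?_, fun h => ?_⟩
    · by_contra hd
      exact hcon (x, c') hd hP' hx
    · cases h
      exact ⟨Reachable.refl u, hu⟩
  have hsplit := Finset.card_filter_add_card_filter_not (s := K) P
  rw [habsent, Finset.card_singleton, Finset.card_product, Finset.card_univ, Fintype.card_bool]
    at hsplit
  obtain ⟨m, hm⟩ := hpresent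
  omega

end SimpleGraph

namespace ZMod

variable {n : ℕ} [NeZero n]

lemma val_sub_eq_ite (w a : ZMod n) :
    (w - a).val = if a.val ≤ w.val then w.val - a.val else n + w.val - a.val := by
  split_ifs with h
  · exact val_sub h
  · have hsum := val_add (w - a) a
    rw [sub_add_cancel] at hsum
    have := val_lt (w - a)
    have := val_lt a
    by_cases hs : (w - a).val + a.val < n
    · rw [Nat.mod_eq_of_lt hs] at hsum
      omega
    · rw [Nat.mod_eq_sub_mod (by omega), Nat.mod_eq_of_lt (by omega)] at hsum
      omega

lemma val_sub_add_one_eq_ite (w a : ZMod n) :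
    (w - (a + 1)).val = if a.val < w.val then w.val - a.val - 1 else n + w.val - a.val - 1 := by
  rw [val_sub_eq_ite, val_add, val_one_eq_one_mod, Nat.add_mod_mod]
  have := val_lt a
  have := val_lt w
  rcases Nat.lt_or_ge (a.val + 1) n with h | h
  · rw [Nat.mod_eq_of_lt h]
    split_ifs <;> omega
  · rw [show a.val + 1 = n by omega, Nat.mod_self]
    split_ifs <;> omega

lemma val_sub_add_one_add_one {w a : ZMod n} (h : w ≠ a) :
    (w - (a + 1)).val + 1 = (w - a).val := by
  have : w.val ≠ a.val := fun h' => h (val_injective n h')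
  have := val_lt a
  rw [val_sub_add_one_eq_ite, val_sub_eq_ite]
  split_ifs <;> omega

/-- The first element of `W` met when scanning `x, x + 1, x + 2, …` (junk value `x` if `W = ∅`). -/
noncomputable def firstFrom (W : Set (ZMod n)) (x : ZMod n) : ZMod n :=
  x + (sInf {j : ℕ | x + j ∈ W} : ℕ)

def IsCyclicSucc (W : Set (ZMod n)) (a w : ZMod n) : Prop :=
  (a.val < w.val ∧ ∀ v ∈ W, a.val < v.val → w.val ≤ v.val) ∨
    ((∀ v ∈ W, v.val ≤ a.val) ∧ ∀ v ∈ W, w.val ≤ v.val)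

variable {W : Set (ZMod n)}

lemma firstFrom_spec (hW : W.Nonempty) (x : ZMod n) :
    firstFrom W x ∈ W ∧ ∀ w ∈ W, (firstFrom W x - x).val ≤ (w - x).val := by
  have hmem : ∀ w ∈ W, (w - x).val ∈ {j : ℕ | x + j ∈ W} := fun w hw => by simpa using hw
  obtain ⟨w₀, hw₀⟩ := hW
  have hle : ∀ w ∈ W, sInf {j : ℕ | x + j ∈ W} ≤ (w - x).val :=
    fun w hw => Nat.sInf_le (hmem w hw)
  have hval : (firstFrom W x - x).val = sInf {j : ℕ | x + j ∈ W} := by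
    rw [firstFrom, add_sub_cancel_left, val_natCast,
      Nat.mod_eq_of_lt ((hle w₀ hw₀).trans_lt (val_lt _))]
  exact ⟨Nat.sInf_mem ⟨_, hmem w₀ hw₀⟩, fun w hw => hval ▸ hle w hw⟩

lemma firstFrom_eq_iff (hW : W.Nonempty) {x w : ZMod n} :
    firstFrom W x = w ↔ w ∈ W ∧ ∀ v ∈ W, (w - x).val ≤ (v - x).val := by
  refine ⟨fun h => h ▸ firstFrom_spec hW x, fun ⟨hw, hmin⟩ => ?_⟩
  obtain ⟨hf, hfmin⟩ := firstFrom_spec hW x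
  exact sub_left_injective (val_injective n (le_antisymm (hfmin w hw) (hmin _ hf)))

lemma firstFrom_of_mem {x : ZMod n} (hx : x ∈ W) : firstFrom W x = x :=
  (firstFrom_eq_iff ⟨x, hx⟩).2 ⟨hx, fun v _ => by simp⟩

lemma firstFrom_add_one_of_notMem (hW : W.Nonempty) {x : ZMod n} (hx : x ∉ W) :
    firstFrom W (x + 1) = firstFrom W x := by
  obtain ⟨hf, hfmin⟩ := firstFrom_spec hW x
  refine (firstFrom_eq_iff hW).2 ⟨hf, fun v hv => ?_⟩
  have := hfmin v hv
  rw [← val_sub_add_one_add_one (ne_of_mem_of_not_mem hf hx),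
    ← val_sub_add_one_add_one (ne_of_mem_of_not_mem hv hx)] at this
  omega

lemma reachable_firstFrom (hW : W.Nonempty) {G : SimpleGraph (ZMod n)}
    (hG : ∀ y ∉ W, G.Reachable y (y + 1)) (x : ZMod n) : G.Reachable x (firstFrom W x) := by
  suffices ∀ j x, (firstFrom W x - x).val = j → G.Reachable x (firstFrom W x) from this _ x rfl
  intro j
  induction j with
  | zero =>
    intro x hx
    rw [val_eq_zero, sub_eq_zero] at hx
    rw [hx]
  | succ j ih =>
    intro x hx
    have hxW : x ∉ W := fun h => by simp [firstFrom_of_mem h] at hx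
    have hf := (firstFrom_spec hW x).1
    rw [← firstFrom_add_one_of_notMem hW hxW] at hf hx ⊢
    rw [← val_sub_add_one_add_one (ne_of_mem_of_not_mem hf hxW)] at hx
    exact (hG x hxW).trans (ih (x + 1) (by omega))

lemma firstFrom_add_one_eq_iff (hW : W.Nonempty) {a w : ZMod n} :
    firstFrom W (a + 1) = w ↔ w ∈ W ∧ IsCyclicSucc W a w := by
  rw [firstFrom_eq_iff hW]
  refine and_congr_right fun hw => ?_
  have hlt := fun v : ZMod n => val_lt v
  simp only [val_sub_add_one_eq_ite, IsCyclicSucc]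
  constructor
  · intro hmin
    by_cases haw : a.val < w.val
    · refine Or.inl ⟨haw, fun v hv hav => ?_⟩
      have := hmin v hv
      rw [if_pos haw, if_pos hav] at this
      omega
    · refine Or.inr ⟨fun v hv => ?_, fun v hv => ?_⟩ <;>
      · have hvw := hmin v hv
        have := hlt v
        have := hlt a
        rw [if_neg haw] at hvw
        split_ifs at hvw <;> omega
  · rintro (⟨haw, hmin⟩ | ⟨hmax, hmin⟩) v hv
    · have := hmin v hv
      have := hlt v
      have := hlt w
      rw [if_pos haw]
      split_ifs with hav <;> omega
    · have := hmin v hv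
      have := hmax v hv
      have := hmax w hw
      rw [if_neg (by omega), if_neg (by omega)]
      omega

end ZMod

structure GoingDown (n : ℕ) [NeZero n] where
  T : Finset (ZMod n)
  T' : Finset (ZMod n)
  r : ZMod n → ZMod n
  b : ZMod n → ZMod n
  g : ZMod n → ZMod n
  g1 : ZMod n → ZMod n
  g2 : ZMod n → ZMod n
  k₀ : ZMod n
  hr : ∀ i ∈ T, r i ∈ T ∧ r (r i) = i ∧ r i ≠ i
  hb : ∀ i ∈ T, b i ∈ T ∧ b (b i) = i ∧ b i ≠ i
  hk₀ : k₀ ∈ T'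
  hT'T : T' ⊆ T
  hT'cl : ∀ x ∈ T', r x ∈ T' ∧ b x ∈ T'
  hT'conn : ∀ (P : ZMod n → Prop) (x : ZMod n), x ∈ T' → P x →
    (∀ z ∈ T', P z → P (r z) ∧ P (b z)) → ∀ y ∈ T', P y
  hsep : ¬ (FSgraph n T r b).Reachable k₀ (k₀ + 1)
  hord1 : ∀ x ∈ T, ∀ y ∈ T, x.val < y.val → (g x).val < (g y).val
  hord2 : ∀ x ∈ T', (g x).val < (g1 x).val ∧ (g1 x).val < (g2 x).val
  hord3 : ∀ x ∈ T', ∀ y ∈ T, x.val < y.val → (g2 x).val < (g y).val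

namespace GoingDown

open SimpleGraph ZMod

variable {n : ℕ} [NeZero n] (D : GoingDown n)

lemma r_mem {s : ZMod n} (hs : s ∈ D.T) : D.r s ∈ D.T := (D.hr s hs).1
lemma b_mem {s : ZMod n} (hs : s ∈ D.T) : D.b s ∈ D.T := (D.hb s hs).1
lemma r_r {s : ZMod n} (hs : s ∈ D.T) : D.r (D.r s) = s := (D.hr s hs).2.1
lemma b_b {s : ZMod n} (hs : s ∈ D.T) : D.b (D.b s) = s := (D.hb s hs).2.1
lemma r_ne {s : ZMod n} (hs : s ∈ D.T) : D.r s ≠ s := (D.hr s hs).2.2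
lemma b_ne {s : ZMod n} (hs : s ∈ D.T) : D.b s ≠ s := (D.hb s hs).2.2
lemma r_mem' {s : ZMod n} (hs : s ∈ D.T') : D.r s ∈ D.T' := (D.hT'cl s hs).1
lemma b_mem' {s : ZMod n} (hs : s ∈ D.T') : D.b s ∈ D.T' := (D.hT'cl s hs).2
lemma k₀_mem : D.k₀ ∈ D.T := D.hT'T D.hk₀

lemma r_eq_iff {s t : ZMod n} (hs : s ∈ D.T) (ht : t ∈ D.T) : D.r s = t ↔ s = D.r t :=
  ⟨fun h => h ▸ (D.r_r hs).symm, fun h => h ▸ D.r_r ht⟩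

lemma b_eq_iff {s t : ZMod n} (hs : s ∈ D.T) (ht : t ∈ D.T) : D.b s = t ↔ s = D.b t :=
  ⟨fun h => h ▸ (D.b_b hs).symm, fun h => h ▸ D.b_b ht⟩

lemma r_mem'_iff {s : ZMod n} (hs : s ∈ D.T) : D.r s ∈ D.T' ↔ s ∈ D.T' :=
  ⟨fun h => D.r_r hs ▸ D.r_mem' h, D.r_mem'⟩

/-- `(s, j)` stands for the vertex `s_{i + j/3}` of `D(S, s_k)`, where `s = s_i`. -/
def IsVertex (p : ZMod n × ℕ) : Prop :=
  p.1 ∈ D.T ∧ (p.2 = 0 ∨ p.1 ∈ D.T' ∧ (p.2 = 1 ∨ p.2 = 2))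

def emb (p : ZMod n × ℕ) : ZMod n :=
  if p.2 = 0 then D.g p.1 else if p.2 = 1 then D.g1 p.1 else D.g2 p.1

/-- Three times the index `i + j/3` of `s_{i + j/3}`. -/
def index (p : ZMod n × ℕ) : ℕ := 3 * p.1.val + p.2

def vertexSet : Set (ZMod n) := D.emb '' {p | D.IsVertex p}

@[simp] lemma emb_zero (s : ZMod n) : D.emb (s, 0) = D.g s := rfl
@[simp] lemma emb_one (s : ZMod n) : D.emb (s, 1) = D.g1 s := rfl
@[simp] lemma emb_two (s : ZMod n) : D.emb (s, 2) = D.g2 s := rfl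

lemma image_union_eq_vertexSet :
    D.g '' D.T ∪ D.g1 '' D.T' ∪ D.g2 '' D.T' = D.vertexSet := by
  ext w
  simp only [vertexSet, IsVertex, Set.mem_union, Set.mem_image, Finset.mem_coe, Set.mem_ofPred_eq,
    Prod.exists]
  constructor
  · rintro ((⟨s, hs, rfl⟩ | ⟨s, hs, rfl⟩) | ⟨s, hs, rfl⟩)
    · exact ⟨s, 0, ⟨hs, Or.inl rfl⟩, rfl⟩
    · exact ⟨s, 1, ⟨D.hT'T hs, Or.inr ⟨hs, Or.inl rfl⟩⟩, rfl⟩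
    · exact ⟨s, 2, ⟨D.hT'T hs, Or.inr ⟨hs, Or.inr rfl⟩⟩, rfl⟩
  · rintro ⟨s, j, ⟨hs, rfl | ⟨hs', rfl | rfl⟩⟩, rfl⟩
    · exact Or.inl (Or.inl ⟨s, hs, rfl⟩)
    · exact Or.inl (Or.inr ⟨s, hs', rfl⟩)
    · exact Or.inr ⟨s, hs', rfl⟩

lemma IsVertex.snd_le {p : ZMod n × ℕ} (hp : D.IsVertex p) : p.2 ≤ 2 := by
  rcases hp.2 with h | ⟨-, h | h⟩ <;> omega

lemma g_le_emb {p : ZMod n × ℕ} (hp : D.IsVertex p) : (D.g p.1).val ≤ (D.emb p).val := by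
  obtain ⟨s, j⟩ := p
  obtain ⟨-, rfl | ⟨hs', rfl | rfl⟩⟩ := hp
  · exact le_rfl
  · exact (D.hord2 s hs').1.le
  · exact ((D.hord2 s hs').1.trans (D.hord2 s hs').2).le

lemma emb_lt_g {p : ZMod n × ℕ} (hp : D.IsVertex p) {t : ZMod n} (ht : t ∈ D.T)
    (h : p.1.val < t.val) : (D.emb p).val < (D.g t).val := by
  obtain ⟨s, j⟩ := p
  obtain ⟨hs, rfl | ⟨hs', rfl | rfl⟩⟩ := hp
  · exact D.hord1 s hs t ht h
  · exact (D.hord2 s hs').2.trans (D.hord3 s hs' t ht h)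
  · exact D.hord3 s hs' t ht h

lemma emb_val_lt {p q : ZMod n × ℕ} (hp : D.IsVertex p) (hq : D.IsVertex q)
    (h : index p < index q) : (D.emb p).val < (D.emb q).val := by
  obtain ⟨s, i⟩ := p
  obtain ⟨t, j⟩ := q
  simp only [index] at h
  have := hp.snd_le
  have := hq.snd_le
  rcases Nat.lt_or_ge s.val t.val with hst | hst
  · exact (D.emb_lt_g hp hq.1 hst).trans_le (D.g_le_emb hq)
  obtain rfl : s = t := val_injective n (by omega)
  obtain ⟨-, rfl | ⟨hs', rfl | rfl⟩⟩ := hq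
  · omega
  all_goals
    have := D.hord2 s hs'
    obtain ⟨-, rfl | ⟨-, rfl | rfl⟩⟩ := hp <;> simp only [emb_zero, emb_one, emb_two] <;> omega

lemma vertexSet_nonempty : D.vertexSet.Nonempty :=
  ⟨D.g D.k₀, (D.k₀, 0), ⟨D.k₀_mem, Or.inl rfl⟩, rfl⟩

lemma emb_val_le_iff {p q : ZMod n × ℕ} (hp : D.IsVertex p) (hq : D.IsVertex q) :
    (D.emb p).val ≤ (D.emb q).val ↔ index p ≤ index q := by
  refine ⟨fun h => not_lt.1 fun h' => (D.emb_val_lt hq hp h').not_ge h, fun h => ?_⟩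
  rcases h.lt_or_eq with h | h
  · exact (D.emb_val_lt hp hq h).le
  · have := hp.snd_le
    have := hq.snd_le
    simp only [index] at h
    obtain ⟨s, i⟩ := p
    obtain ⟨t, j⟩ := q
    obtain rfl : s = t := val_injective n (by simp only at *; omega)
    obtain rfl : i = j := by simp only at *; omega
    exact le_rfl

lemma emb_val_lt_iff {p q : ZMod n × ℕ} (hp : D.IsVertex p) (hq : D.IsVertex q) :
    (D.emb p).val < (D.emb q).val ↔ index p < index q := by
  simpa only [not_le] using (D.emb_val_le_iff hq hp).not

lemma emb_injOn : Set.InjOn D.emb {p | D.IsVertex p} := fun p hp q hq h => by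
  have hle := (D.emb_val_le_iff hp hq).1 (le_of_eq (congrArg val h))
  have hge := (D.emb_val_le_iff hq hp).1 (le_of_eq (congrArg val h.symm))
  have := hp.snd_le
  have := hq.snd_le
  obtain ⟨s, i⟩ := p
  obtain ⟨t, j⟩ := q
  simp only [index] at *
  obtain rfl : s = t := val_injective n (by omega)
  obtain rfl : i = j := by omega
  rfl

lemma firstFrom_emb_add_one {p q : ZMod n × ℕ} (hp : D.IsVertex p) (hq : D.IsVertex q)
    (h : (index p < index q ∧ ∀ p', D.IsVertex p' → index p < index p' → index q ≤ index p') ∨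
      ((∀ p', D.IsVertex p' → index p' ≤ index p) ∧ ∀ p', D.IsVertex p' → index q ≤ index p')) :
    firstFrom D.vertexSet (D.emb p + 1) = D.emb q := by
  refine (firstFrom_add_one_eq_iff D.vertexSet_nonempty).2 ⟨⟨q, hq, rfl⟩, ?_⟩
  simp only [IsCyclicSucc, vertexSet, Set.forall_mem_image, Set.mem_ofPred_eq]
  rcases h with ⟨h1, h2⟩ | ⟨h1, h2⟩
  · exact Or.inl ⟨(D.emb_val_lt_iff hp hq).2 h1, fun p' hp' hlt =>
      (D.emb_val_le_iff hq hp').2 (h2 p' hp' ((D.emb_val_lt_iff hp hp').1 hlt))⟩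
  · exact Or.inr ⟨fun p' hp' => (D.emb_val_le_iff hp' hp).2 (h1 p' hp'),
      fun p' hp' => (D.emb_val_le_iff hq hp').2 (h2 p' hp')⟩

lemma firstFrom_g_add_one {s : ZMod n} (hs : s ∈ D.T') :
    firstFrom D.vertexSet (D.g s + 1) = D.g1 s :=
  D.firstFrom_emb_add_one (p := (s, 0)) (q := (s, 1)) ⟨D.hT'T hs, Or.inl rfl⟩
    ⟨D.hT'T hs, Or.inr ⟨hs, Or.inl rfl⟩⟩
    (Or.inl ⟨by simp [index], fun p' _ h => by simp only [index] at *; omega⟩)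

lemma firstFrom_g1_add_one {s : ZMod n} (hs : s ∈ D.T') :
    firstFrom D.vertexSet (D.g1 s + 1) = D.g2 s :=
  D.firstFrom_emb_add_one (p := (s, 1)) (q := (s, 2)) ⟨D.hT'T hs, Or.inr ⟨hs, Or.inl rfl⟩⟩
    ⟨D.hT'T hs, Or.inr ⟨hs, Or.inr rfl⟩⟩
    (Or.inl ⟨by simp [index], fun p' _ h => by simp only [index] at *; omega⟩)

def last (s : ZMod n) : ZMod n × ℕ := (s, if s ∈ D.T' then 2 else 0)

lemma last_isVertex {s : ZMod n} (hs : s ∈ D.T) : D.IsVertex (D.last s) := by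
  by_cases hs' : s ∈ D.T' <;> simp [last, IsVertex, hs, hs']

lemma index_le_last {p : ZMod n × ℕ} (hp : D.IsVertex p) : index p ≤ index (D.last p.1) := by
  obtain ⟨s, j⟩ := p
  obtain ⟨-, rfl | ⟨hs', rfl | rfl⟩⟩ := hp <;> simp_all [index, last]

lemma firstFrom_last_add_one {s : ZMod n} (hs : s ∈ D.T) :
    firstFrom D.vertexSet (D.emb (D.last s) + 1) = D.g (firstFrom D.T (s + 1)) := by
  obtain ⟨ht, hsucc⟩ := (firstFrom_add_one_eq_iff (W := (D.T : Set (ZMod n)))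
    ⟨s, hs⟩).1 rfl
  set t := firstFrom D.T (s + 1)
  refine D.firstFrom_emb_add_one (D.last_isVertex hs) (q := (t, 0)) ⟨ht, Or.inl rfl⟩ ?_
  have hlast : index (D.last s) ≤ 3 * s.val + 2 := by
    unfold last index; split_ifs <;> simp
  have hbelow : ∀ p', D.IsVertex p' → p'.1.val ≤ s.val → index p' ≤ index (D.last s) := by
    intro p' hp' hle
    rcases hle.lt_or_eq with hlt | heq
    · have := hp'.snd_le
      simp only [index] at *
      unfold last; split_ifs <;> simp only <;> omega
    · exact val_injective n heq ▸ D.index_le_last hp'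
  have hfst : ∀ p' : ZMod n × ℕ, 3 * p'.1.val ≤ index p' := fun p' => by simp [index]
  rcases hsucc with ⟨hlt, hmin⟩ | ⟨hmax, hmin⟩
  · refine Or.inl ⟨by simp only [index] at *; omega, fun p' hp' hlt' => ?_⟩
    have hsu : s.val < p'.1.val := not_le.1 fun h => (hbelow p' hp' h).not_gt hlt'
    have := hmin p'.1 hp'.1 hsu
    have := hfst p'
    simp only [index] at *
    omega
  · refine Or.inr ⟨fun p' hp' => hbelow p' hp' (hmax p'.1 hp'.1), fun p' hp' => ?_⟩
    have := hmin p'.1 hp'.1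
    have := hfst p'
    simp only [index] at *
    omega

abbrev FS : SimpleGraph (ZMod n) := FSgraph n D.T D.r D.b

abbrev FD : SimpleGraph (ZMod n) := FDgraph n D.T D.T' D.r D.b D.g D.g1 D.g2 D.k₀

/-- `F(S)` with the blue edge at `s_k` and the red edge at `s_k` deleted. -/
def FScut : SimpleGraph (ZMod n) :=
  fromRel fun x y => (y = x + 1 ∧ x ∉ D.T) ∨
    (x - 1 ∈ D.T ∧ x - 1 ≠ D.k₀ ∧ x - 1 ≠ D.r D.k₀ ∧ y = D.r (x - 1) + 1) ∨
    (x ∈ D.T ∧ x ≠ D.k₀ ∧ x ≠ D.b D.k₀ ∧ y = D.b x)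

lemma FScut_le : D.FScut ≤ D.FS := fun x y h => by
  simp only [FScut, FSgraph, fromRel_adj] at h ⊢
  exact ⟨h.1, by tauto⟩

lemma FScut_reachable_add_one {x : ZMod n} (hx : x ∉ D.T) : D.FScut.Reachable x (x + 1) :=
  reachable_fromRel_of_rel (Or.inl ⟨rfl, hx⟩)

lemma FScut_reachable_red {s : ZMod n} (hs : s ∈ D.T) (h1 : s ≠ D.k₀) (h2 : s ≠ D.r D.k₀) :
    D.FScut.Reachable (s + 1) (D.r s + 1) :=
  reachable_fromRel_of_rel (Or.inr (Or.inl (by simpa using ⟨hs, h1, h2⟩)))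

lemma FScut_reachable_firstFrom (x : ZMod n) : D.FScut.Reachable x (firstFrom D.T x) :=
  reachable_firstFrom ⟨_, D.k₀_mem⟩ (fun _ => D.FScut_reachable_add_one) x

lemma FScut_reachable_blue {s : ZMod n} (hs : s ∈ D.T) (h1 : s ≠ D.k₀) (h2 : s ≠ D.b D.k₀) :
    D.FScut.Reachable s (D.b s) :=
  reachable_fromRel_of_rel (Or.inr (Or.inr ⟨hs, h1, h2, rfl⟩))

lemma FS_reachable_red {s : ZMod n} (hs : s ∈ D.T) : D.FS.Reachable (s + 1) (D.r s + 1) :=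
  reachable_fromRel_of_rel (Or.inr (Or.inl (by simpa using hs)))

lemma FS_reachable_blue {s : ZMod n} (hs : s ∈ D.T) : D.FS.Reachable s (D.b s) :=
  reachable_fromRel_of_rel (Or.inr (Or.inr ⟨hs, rfl⟩))

/-- The two half-edge slots of `x` in the 2-factor `F(S)`: `(x, false)` holds the blue edge at `x`,
or the Hamilton edge `x (x + 1)` if `x ∉ T`; `(x, true)` holds the red edge at `x - 1`, or the
Hamilton edge `(x - 1) x` if `x - 1 ∉ T`. -/
def slotMate : ZMod n × Bool → ZMod n × Bool
  | (x, false) => if x ∈ D.T then (D.b x, false) else (x + 1, true)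
  | (x, true) => if x - 1 ∈ D.T then (D.r (x - 1) + 1, true) else (x - 1, false)

/-- The slots whose edge survives in `FScut`. -/
def CutSlot : ZMod n × Bool → Prop
  | (x, false) => x ∈ D.T → x ≠ D.k₀ ∧ x ≠ D.b D.k₀
  | (x, true) => x - 1 ∈ D.T → x - 1 ≠ D.k₀ ∧ x - 1 ≠ D.r D.k₀

lemma slotMate_slotMate (d : ZMod n × Bool) : D.slotMate (D.slotMate d) = d := by
  obtain ⟨x, _ | _⟩ := d
  · by_cases hx : x ∈ D.T
    · simp [slotMate, hx, D.b_mem hx, D.b_b hx]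
    · simp [slotMate, hx]
  · by_cases hx : x - 1 ∈ D.T
    · simp [slotMate, hx, D.r_mem hx, D.r_r hx]
    · simp [slotMate, hx]

lemma slotMate_ne (d : ZMod n × Bool) : D.slotMate d ≠ d := by
  obtain ⟨x, _ | _⟩ := d
  · by_cases hx : x ∈ D.T
    · simp [slotMate, hx, D.b_ne hx]
    · simp [slotMate, hx]
  · by_cases hx : x - 1 ∈ D.T
    · simp only [slotMate, hx, if_true, ne_eq, Prod.mk.injEq, and_true]
      exact fun h => D.r_ne hx (eq_sub_of_add_eq h)
    · simp [slotMate, hx]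

lemma cutSlot_slotMate {d : ZMod n × Bool} (hd : D.CutSlot d) : D.CutSlot (D.slotMate d) := by
  obtain ⟨x, _ | _⟩ := d
  · by_cases hx : x ∈ D.T
    · obtain ⟨h1, h2⟩ := hd hx
      simp only [slotMate, hx, if_true, CutSlot]
      exact fun _ => ⟨fun h => h2 ((D.b_eq_iff hx D.k₀_mem).1 h),
        fun h => h1 (D.b_b hx ▸ h ▸ D.b_b D.k₀_mem)⟩
    · simp [slotMate, CutSlot, hx]
  · by_cases hx : x - 1 ∈ D.T
    · obtain ⟨h1, h2⟩ := hd hx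
      simp only [slotMate, hx, if_true, CutSlot, add_sub_cancel_right]
      exact fun _ => ⟨fun h => h2 ((D.r_eq_iff hx D.k₀_mem).1 h),
        fun h => h1 (D.r_r hx ▸ h ▸ D.r_r D.k₀_mem)⟩
    · simp [slotMate, CutSlot, hx]

lemma FScut_reachable_slotMate {d : ZMod n × Bool} (hd : D.CutSlot d) :
    D.FScut.Reachable d.1 (D.slotMate d).1 := by
  obtain ⟨x, _ | _⟩ := d
  · by_cases hx : x ∈ D.T
    · simpa [slotMate, hx] using D.FScut_reachable_blue hx (hd hx).1 (hd hx).2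
    · simpa [slotMate, hx] using D.FScut_reachable_add_one hx
  · by_cases hx : x - 1 ∈ D.T
    · simpa [slotMate, hx] using D.FScut_reachable_red hx (hd hx).1 (hd hx).2
    · simpa [slotMate, hx] using (D.FScut_reachable_add_one hx).symm

lemma exists_not_cutSlot {x : ZMod n} {c : Bool} (h : ¬ D.CutSlot (x, c)) :
    ∃ d ≠ (x, c), ¬ D.CutSlot d ∧ D.FScut.Reachable x d.1 :=
  D.FScut.exists_absent_slot_reachable D.CutSlot D.slotMate
    (fun _ => D.FScut_reachable_slotMate) (fun _ => D.cutSlot_slotMate)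
    (fun d _ => D.slotMate_slotMate d) (fun d _ => D.slotMate_ne d) h

lemma FScut_reachable_b_k₀ : D.FScut.Reachable D.k₀ (D.b D.k₀) := by
  obtain ⟨⟨x, c⟩, hne, hx, hreach⟩ :=
    D.exists_not_cutSlot (x := D.k₀) (c := false) fun h => (h D.k₀_mem).1 rfl
  cases c <;> simp only [CutSlot, Classical.not_imp, not_and_or, not_not] at hx
  · obtain ⟨-, rfl | rfl⟩ := hx
    · exact absurd rfl hne
    · exact hreach
  · obtain ⟨-, h | h⟩ := hx <;> obtain rfl := eq_add_of_sub_eq h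
    · exact absurd (hreach.mono D.FScut_le) D.hsep
    · exact absurd ((hreach.mono D.FScut_le).trans (D.FS_reachable_red D.k₀_mem).symm) D.hsep

lemma FScut_reachable_r_k₀_add_one : D.FScut.Reachable (D.k₀ + 1) (D.r D.k₀ + 1) := by
  obtain ⟨⟨x, c⟩, hne, hx, hreach⟩ := D.exists_not_cutSlot (x := D.k₀ + 1) (c := true)
    fun h => (h (by simpa using D.k₀_mem)).1 (by simp)
  cases c <;> simp only [CutSlot, Classical.not_imp, not_and_or, not_not] at hx
  · obtain ⟨-, rfl | rfl⟩ := hx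
    · exact absurd (hreach.mono D.FScut_le).symm D.hsep
    · exact absurd ((D.FS_reachable_blue D.k₀_mem).trans (hreach.mono D.FScut_le).symm) D.hsep
  · obtain ⟨-, h | h⟩ := hx <;> obtain rfl := eq_add_of_sub_eq h
    · exact absurd rfl hne
    · exact hreach

lemma FScut_reachable_iff {x y : ZMod n} : D.FScut.Reachable x y ↔ D.FS.Reachable x y := by
  refine ⟨fun h => h.mono D.FScut_le, fun h => h.map_of_adj id fun x y hxy => ?_⟩
  refine fromRel_adj_elim (fun _ _ h => h.symm) ?_ hxy
  rintro x _ (⟨rfl, hx⟩ | ⟨hs, rfl⟩ | ⟨hx, rfl⟩)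
  · exact D.FScut_reachable_add_one hx
  · obtain ⟨s, rfl⟩ : ∃ s, x = s + 1 := ⟨x - 1, by ring⟩
    rw [add_sub_cancel_right] at hs ⊢
    by_cases h1 : s = D.k₀
    · exact h1 ▸ D.FScut_reachable_r_k₀_add_one
    by_cases h2 : s = D.r D.k₀
    · rw [h2, D.r_r D.k₀_mem]
      exact D.FScut_reachable_r_k₀_add_one.symm
    exact D.FScut_reachable_red hs h1 h2
  · by_cases h1 : x = D.k₀
    · exact h1 ▸ D.FScut_reachable_b_k₀
    by_cases h2 : x = D.b D.k₀
    · rw [h2, D.b_b D.k₀_mem]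
      exact D.FScut_reachable_b_k₀.symm
    exact D.FScut_reachable_blue hx h1 h2

lemma FD_reachable_add_one {x : ZMod n} (hx : x ∉ D.vertexSet) : D.FD.Reachable x (x + 1) :=
  reachable_fromRel_of_rel (Or.inl ⟨rfl, D.image_union_eq_vertexSet ▸ hx⟩)

lemma FD_reachable_firstFrom (x : ZMod n) : D.FD.Reachable x (firstFrom D.vertexSet x) :=
  reachable_firstFrom D.vertexSet_nonempty (fun _ => D.FD_reachable_add_one) x

lemma FD_reachable_red {s : ZMod n} (hs : s ∈ D.T) :
    D.FD.Reachable (D.g s + 1) (D.g (D.r s) + 1) :=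
  reachable_fromRel_of_rel (by grind)

lemma FD_reachable_red1 {s : ZMod n} (hs : s ∈ D.T') (h1 : s ≠ D.k₀) (h2 : D.r s ≠ D.k₀) :
    D.FD.Reachable (D.g1 s + 1) (D.g1 (D.r s) + 1) :=
  reachable_fromRel_of_rel (by grind)

lemma FD_reachable_red2 {s : ZMod n} (hs : s ∈ D.T') (h1 : s ≠ D.k₀) (h2 : D.r s ≠ D.k₀) :
    D.FD.Reachable (D.g2 s + 1) (D.g2 (D.r s) + 1) :=
  reachable_fromRel_of_rel (by grind)

lemma FD_reachable_red_k₀ : D.FD.Reachable (D.g1 (D.r D.k₀) + 1) (D.g2 D.k₀ + 1) :=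
  reachable_fromRel_of_rel (by grind)

lemma FD_reachable_blue {s : ZMod n} (hs : s ∈ D.T) (h1 : s ≠ D.k₀) (h2 : D.b s ≠ D.k₀) :
    D.FD.Reachable (D.g s) (D.g (D.b s)) :=
  reachable_fromRel_of_rel (by grind)

lemma FD_reachable_blue1 {s : ZMod n} (hs : s ∈ D.T') (h1 : s ≠ D.k₀) (h2 : D.b s ≠ D.k₀) :
    D.FD.Reachable (D.g1 s) (D.g1 (D.b s)) :=
  reachable_fromRel_of_rel (by grind)

lemma FD_reachable_blue2 {s : ZMod n} (hs : s ∈ D.T') (h1 : s ≠ D.k₀) (h2 : D.b s ≠ D.k₀) :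
    D.FD.Reachable (D.g2 s) (D.g2 (D.b s)) :=
  reachable_fromRel_of_rel (by grind)

lemma FD_reachable_blue_k₀ : D.FD.Reachable (D.g (D.b D.k₀)) (D.g1 D.k₀) :=
  reachable_fromRel_of_rel (by grind)

lemma FD_reachable_blue1_k₀ : D.FD.Reachable (D.g1 (D.b D.k₀)) (D.g2 D.k₀) :=
  reachable_fromRel_of_rel (by grind)

lemma FD_reachable_blue2_k₀ : D.FD.Reachable (D.g2 (D.b D.k₀)) (D.g D.k₀) :=
  reachable_fromRel_of_rel (by grind)

lemma FD_reachable_g1 {s : ZMod n} (hs : s ∈ D.T') : D.FD.Reachable (D.g s + 1) (D.g1 s) :=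
  D.firstFrom_g_add_one hs ▸ D.FD_reachable_firstFrom _

lemma FD_reachable_g2 {s : ZMod n} (hs : s ∈ D.T') : D.FD.Reachable (D.g1 s + 1) (D.g2 s) :=
  D.firstFrom_g1_add_one hs ▸ D.FD_reachable_firstFrom _

lemma FD_reachable_last {s : ZMod n} (hs : s ∈ D.T) :
    D.FD.Reachable (D.emb (D.last s) + 1) (D.g (firstFrom D.T (s + 1))) :=
  D.firstFrom_last_add_one hs ▸ D.FD_reachable_firstFrom _

lemma emb_last_of_mem {s : ZMod n} (hs : s ∈ D.T') : D.emb (D.last s) = D.g2 s := by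
  simp [last, emb, hs]

lemma emb_last_of_notMem {s : ZMod n} (hs : s ∉ D.T') : D.emb (D.last s) = D.g s := by
  simp [last, emb, hs]

lemma FD_reachable_last_red {s : ZMod n} (hs : s ∈ D.T) (h1 : s ≠ D.k₀) (h2 : D.r s ≠ D.k₀) :
    D.FD.Reachable (D.emb (D.last s) + 1) (D.emb (D.last (D.r s)) + 1) := by
  by_cases hs' : s ∈ D.T'
  · rw [D.emb_last_of_mem hs', D.emb_last_of_mem (D.r_mem' hs')]
    exact D.FD_reachable_red2 hs' h1 h2
  · rw [D.emb_last_of_notMem hs', D.emb_last_of_notMem (mt (D.r_mem'_iff hs).1 hs')]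
    exact D.FD_reachable_red hs

lemma FD_reachable_of_FScut {u v : ZMod n} (h : D.FScut.Reachable u v) :
    D.FD.Reachable (D.g (firstFrom D.T u)) (D.g (firstFrom D.T v)) := by
  refine h.map_of_adj (fun x => D.g (firstFrom D.T x)) fun x y hxy => ?_
  refine fromRel_adj_elim (P := fun x y => D.FD.Reachable (D.g (firstFrom D.T x))
    (D.g (firstFrom D.T y))) (fun _ _ h => h.symm) ?_ hxy
  rintro x _ (⟨rfl, hx⟩ | ⟨hs, h1, h2, rfl⟩ | ⟨hx, h1, h2, rfl⟩)
  · rw [firstFrom_add_one_of_notMem ⟨_, D.k₀_mem⟩ hx]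
  · obtain ⟨s, rfl⟩ : ∃ s, x = s + 1 := ⟨x - 1, by ring⟩
    rw [add_sub_cancel_right] at hs h1 h2 ⊢
    have h2' : D.r s ≠ D.k₀ := fun h => h2 ((D.r_eq_iff hs D.k₀_mem).1 h)
    exact ((D.FD_reachable_last hs).symm.trans (D.FD_reachable_last_red hs h1 h2')).trans
      (D.FD_reachable_last (D.r_mem hs))
  · have h2' : D.b x ≠ D.k₀ := fun h => h2 ((D.b_eq_iff hx D.k₀_mem).1 h)
    rw [firstFrom_of_mem (Finset.mem_coe.2 hx), firstFrom_of_mem (Finset.mem_coe.2 (D.b_mem hx))]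
    exact D.FD_reachable_blue hx h1 h2'

/-- The cycle `C` of `S` through `s_k`, with its blue edge at `s_k` deleted. -/
def cycleCutBlue : SimpleGraph (ZMod n) :=
  fromRel fun x y => x ∈ D.T' ∧ (y = D.r x ∨ (y = D.b x ∧ x ≠ D.k₀ ∧ y ≠ D.k₀))

/-- The cycle `C` with the vertex `s_k` deleted. -/
def cycleCutK : SimpleGraph (ZMod n) :=
  fromRel fun x y => x ∈ D.T' ∧ x ≠ D.k₀ ∧ y ≠ D.k₀ ∧ (y = D.r x ∨ y = D.b x)

/-- Half-edge slots of `C`: `(x, false)` holds the red edge at `x`, `(x, true)` the blue one. -/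
def cycleMate : ZMod n × Bool → ZMod n × Bool
  | (x, false) => (D.r x, false)
  | (x, true) => (D.b x, true)

lemma cycleMate_mem {d : ZMod n × Bool} (hd : d.1 ∈ D.T') : (D.cycleMate d).1 ∈ D.T' := by
  obtain ⟨x, _ | _⟩ := d
  exacts [D.r_mem' hd, D.b_mem' hd]

lemma cycleMate_cycleMate {d : ZMod n × Bool} (hd : d.1 ∈ D.T) :
    D.cycleMate (D.cycleMate d) = d := by
  obtain ⟨x, _ | _⟩ := d
  · simp [cycleMate, D.r_r hd]
  · simp [cycleMate, D.b_b hd]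

lemma cycleMate_ne {d : ZMod n × Bool} (hd : d.1 ∈ D.T) : D.cycleMate d ≠ d := by
  obtain ⟨x, _ | _⟩ := d
  · simp [cycleMate, D.r_ne hd]
  · simp [cycleMate, D.b_ne hd]

lemma cycleCutBlue_adj_mem {x y : ZMod n} (h : D.cycleCutBlue.Adj x y) : x ∈ D.T' ∧ y ∈ D.T' := by
  rcases ((fromRel_adj _ x y).1 h).2 with ⟨hx, rfl | ⟨rfl, -⟩⟩ | ⟨hy, rfl | ⟨rfl, -⟩⟩
  exacts [⟨hx, D.r_mem' hx⟩, ⟨hx, D.b_mem' hx⟩, ⟨D.r_mem' hy, hy⟩, ⟨D.b_mem' hy, hy⟩]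

lemma cycleCutK_adj_mem {x y : ZMod n} (h : D.cycleCutK.Adj x y) :
    (x ∈ D.T' ∧ x ≠ D.k₀) ∧ (y ∈ D.T' ∧ y ≠ D.k₀) := by
  rcases ((fromRel_adj _ x y).1 h).2 with ⟨hx, h1, h2, rfl | rfl⟩ | ⟨hy, h1, h2, rfl | rfl⟩
  exacts [⟨⟨hx, h1⟩, D.r_mem' hx, h2⟩, ⟨⟨hx, h1⟩, D.b_mem' hx, h2⟩,
    ⟨⟨D.r_mem' hy, h2⟩, hy, h1⟩, ⟨⟨D.b_mem' hy, h2⟩, hy, h1⟩]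

lemma mem_of_cycleCutK_reachable {x : ZMod n} (h : D.cycleCutK.Reachable (D.b D.k₀) x) :
    x ∈ D.T' ∧ x ≠ D.k₀ :=
  h.mem_of_adj_mem (S := {x | x ∈ D.T' ∧ x ≠ D.k₀}) (fun _ _ h _ => (D.cycleCutK_adj_mem h).2)
    ⟨D.b_mem' D.hk₀, D.b_ne D.k₀_mem⟩

lemma cycleCutBlue_reachable_b_k₀ : D.cycleCutBlue.Reachable D.k₀ (D.b D.k₀) := by
  set P : ZMod n × Bool → Prop := fun d => d.1 ∈ D.T' ∧ (d.2 → d.1 ≠ D.k₀ ∧ d.1 ≠ D.b D.k₀)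
  have hP : ∀ d, P d → P (D.cycleMate d) := by
    rintro ⟨x, _ | _⟩ ⟨hx, hk⟩ <;> simp only [P, cycleMate]
    · exact ⟨D.r_mem' hx, nofun⟩
    · obtain ⟨h1, h2⟩ := hk rfl
      exact ⟨D.b_mem' hx, fun _ => ⟨fun h => h2 ((D.b_eq_iff (D.hT'T hx) D.k₀_mem).1 h),
        fun h => h1 (D.b_b (D.hT'T hx) ▸ h ▸ D.b_b D.k₀_mem)⟩⟩
  have hreach : ∀ d, P d → D.cycleCutBlue.Reachable d.1 (D.cycleMate d).1 := by
    rintro ⟨x, _ | _⟩ hd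
    · exact reachable_fromRel_of_rel ⟨hd.1, Or.inl rfl⟩
    · exact reachable_fromRel_of_rel ⟨hd.1, Or.inr ⟨rfl, (hd.2 rfl).1, ((hP _ hd).2 rfl).1⟩⟩
  obtain ⟨⟨x, c⟩, hne, hx, hreach⟩ := D.cycleCutBlue.exists_absent_slot_reachable P
    D.cycleMate hreach hP (fun d hd => D.cycleMate_cycleMate (D.hT'T hd.1))
    (fun d hd => D.cycleMate_ne (D.hT'T hd.1)) (u := D.k₀) (c := true) fun h => (h.2 rfl).1 rfl
  have hxT' : x ∈ D.T' :=
    hreach.mem_of_adj_mem (fun _ _ h _ => (D.cycleCutBlue_adj_mem h).2) D.hk₀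
  cases c
  · exact absurd ⟨hxT', nofun⟩ hx
  · simp only [P, hxT', true_and, forall_const, not_and_or, not_not] at hx
    rcases hx with rfl | rfl
    exacts [absurd rfl hne, hreach]

lemma cycleCutK_reachable_r_k₀ : D.cycleCutK.Reachable (D.b D.k₀) (D.r D.k₀) := by
  set P : ZMod n × Bool → Prop := fun d => d.1 ∈ D.T' ∧ d.1 ≠ D.k₀ ∧ (D.cycleMate d).1 ≠ D.k₀
  have hP : ∀ d, P d → P (D.cycleMate d) := fun d ⟨hx, h1, h2⟩ =>
    ⟨D.cycleMate_mem hx, h2, by rwa [D.cycleMate_cycleMate (D.hT'T hx)]⟩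
  have hreach : ∀ d, P d → D.cycleCutK.Reachable d.1 (D.cycleMate d).1 := by
    rintro ⟨x, _ | _⟩ ⟨hx, h1, h2⟩
    · exact reachable_fromRel_of_rel ⟨hx, h1, h2, Or.inl rfl⟩
    · exact reachable_fromRel_of_rel ⟨hx, h1, h2, Or.inr rfl⟩
  obtain ⟨⟨x, c⟩, hne, hx, hreach⟩ := D.cycleCutK.exists_absent_slot_reachable P
    D.cycleMate hreach hP (fun d hd => D.cycleMate_cycleMate (D.hT'T hd.1))
    (fun d hd => D.cycleMate_ne (D.hT'T hd.1)) (u := D.b D.k₀) (c := true)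
    fun h => h.2.2 (D.b_b D.k₀_mem)
  obtain ⟨hxT', hxk⟩ : x ∈ D.T' ∧ x ≠ D.k₀ := D.mem_of_cycleCutK_reachable hreach
  have hxT := D.hT'T hxT'
  cases c <;> simp only [P, cycleMate, hxT', hxk, ne_eq, not_false_eq_true, true_and, not_not] at hx
  · rwa [← (D.r_eq_iff hxT D.k₀_mem).1 hx]
  · exact absurd (by rw [(D.b_eq_iff hxT D.k₀_mem).1 hx]) hne

lemma cycleCutBlue_reachable {z : ZMod n} (hz : z ∈ D.T') : D.cycleCutBlue.Reachable D.k₀ z := by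
  refine D.hT'conn (D.cycleCutBlue.Reachable D.k₀) D.k₀ D.hk₀ (Reachable.refl _)
    (fun w hw h => ⟨h.trans (reachable_fromRel_of_rel ⟨hw, Or.inl rfl⟩), ?_⟩) z hz
  by_cases h1 : w = D.k₀
  · exact h1 ▸ D.cycleCutBlue_reachable_b_k₀
  by_cases h2 : D.b w = D.k₀
  · exact h2 ▸ Reachable.refl _
  exact h.trans (reachable_fromRel_of_rel ⟨hw, Or.inr ⟨rfl, h1, h2⟩⟩)

lemma cycleCutK_reachable {z : ZMod n} (hz : z ∈ D.T') (hzk : z ≠ D.k₀) :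
    D.cycleCutK.Reachable (D.b D.k₀) z := by
  refine (D.hT'conn (fun y => y = D.k₀ ∨ D.cycleCutK.Reachable (D.b D.k₀) y) D.k₀ D.hk₀
    (Or.inl rfl) (fun w hw h => ?_) z hz).resolve_left hzk
  rcases h with rfl | h
  · exact ⟨Or.inr D.cycleCutK_reachable_r_k₀, Or.inr (Reachable.refl _)⟩
  have hwk := (D.mem_of_cycleCutK_reachable h).2
  refine ⟨?_, ?_⟩
  · by_cases h2 : D.r w = D.k₀
    · exact Or.inl h2
    · exact Or.inr (h.trans (reachable_fromRel_of_rel ⟨hw, hwk, h2, Or.inl rfl⟩))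
  · by_cases h2 : D.b w = D.k₀
    · exact Or.inl h2
    · exact Or.inr (h.trans (reachable_fromRel_of_rel ⟨hw, hwk, h2, Or.inr rfl⟩))

lemma FD_reachable_g1_of_cycleCutBlue {u v : ZMod n} (h : D.cycleCutBlue.Reachable u v) :
    D.FD.Reachable (D.g1 u) (D.g1 v) := by
  refine h.map_of_adj D.g1 fun x y hxy => ?_
  refine fromRel_adj_elim (P := fun x y => D.FD.Reachable (D.g1 x) (D.g1 y))
    (fun _ _ h => h.symm) ?_ hxy
  rintro x _ ⟨hx, rfl | ⟨rfl, h1, h2⟩⟩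
  · exact ((D.FD_reachable_g1 hx).symm.trans (D.FD_reachable_red (D.hT'T hx))).trans
      (D.FD_reachable_g1 (D.r_mem' hx))
  · exact D.FD_reachable_blue1 hx h1 h2

lemma FD_reachable_g2_of_cycleCutK {u v : ZMod n} (h : D.cycleCutK.Reachable u v) :
    D.FD.Reachable (D.g2 u) (D.g2 v) := by
  refine h.map_of_adj D.g2 fun x y hxy => ?_
  refine fromRel_adj_elim (P := fun x y => D.FD.Reachable (D.g2 x) (D.g2 y))
    (fun _ _ h => h.symm) ?_ hxy
  rintro x _ ⟨hx, h1, h2, rfl | rfl⟩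
  · exact ((D.FD_reachable_g2 hx).symm.trans (D.FD_reachable_red1 hx h1 h2)).trans
      (D.FD_reachable_g2 (D.r_mem' hx))
  · exact D.FD_reachable_blue2 hx h1 h2

lemma FD_reachable_g_b_k₀ : D.FD.Reachable (D.g D.k₀) (D.g (D.b D.k₀)) := by
  simpa only [firstFrom_of_mem (Finset.mem_coe.2 D.k₀_mem),
    firstFrom_of_mem (Finset.mem_coe.2 (D.b_mem D.k₀_mem))] using
    D.FD_reachable_of_FScut D.FScut_reachable_b_k₀

lemma FD_reachable_g1_of_mem {z : ZMod n} (hz : z ∈ D.T') : D.FD.Reachable (D.g D.k₀) (D.g1 z) :=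
  (D.FD_reachable_g_b_k₀.trans D.FD_reachable_blue_k₀).trans
    (D.FD_reachable_g1_of_cycleCutBlue (D.cycleCutBlue_reachable hz))

lemma FD_reachable_g2_of_mem {z : ZMod n} (hz : z ∈ D.T') : D.FD.Reachable (D.g D.k₀) (D.g2 z) := by
  by_cases hzk : z = D.k₀
  · exact hzk ▸ (D.FD_reachable_g1_of_mem (D.b_mem' D.hk₀)).trans D.FD_reachable_blue1_k₀
  · exact D.FD_reachable_blue2_k₀.symm.trans
      (D.FD_reachable_g2_of_cycleCutK (D.cycleCutK_reachable hz hzk))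

lemma FD_reachable_firstFrom_k₀_add_one :
    D.FD.Reachable (D.g D.k₀) (D.g (firstFrom D.T (D.k₀ + 1))) := by
  have hlast := D.FD_reachable_last D.k₀_mem
  rw [D.emb_last_of_mem D.hk₀] at hlast
  exact (((D.FD_reachable_g2_of_mem (D.r_mem' D.hk₀)).trans
    (D.FD_reachable_g2 (D.r_mem' D.hk₀)).symm).trans D.FD_reachable_red_k₀).trans hlast

def compX : D.FScut.ConnectedComponent := D.FScut.connectedComponentMk D.k₀

def compY : D.FScut.ConnectedComponent := D.FScut.connectedComponentMk (D.k₀ + 1)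

lemma compX_ne_compY : D.compX ≠ D.compY :=
  fun h => D.hsep ((ConnectedComponent.exact h).mono D.FScut_le)

open Classical in
noncomputable def merge (q : D.FScut.ConnectedComponent) : D.FScut.ConnectedComponent :=
  if q = D.compY then D.compX else q

lemma merge_compX : D.merge D.compX = D.compX := if_neg D.compX_ne_compY

lemma merge_compY : D.merge D.compY = D.compX := if_pos rfl

lemma merge_ne_compY (q : D.FScut.ConnectedComponent) : D.merge q ≠ D.compY := by
  unfold merge
  split_ifs with h
  exacts [D.compX_ne_compY, h]

lemma merge_eq_of_reachable {u v : ZMod n} (h : D.FScut.Reachable u v) :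
    D.merge (D.FScut.connectedComponentMk u) = D.merge (D.FScut.connectedComponentMk v) := by
  rw [ConnectedComponent.sound h]

noncomputable def vertexLabel (p : ZMod n × ℕ) : D.FScut.ConnectedComponent :=
  if p.2 = 0 then D.merge (D.FScut.connectedComponentMk p.1) else D.compX

noncomputable def label (x : ZMod n) : D.FScut.ConnectedComponent :=
  D.vertexLabel (Function.invFunOn D.emb {p | D.IsVertex p} (firstFrom D.vertexSet x))

lemma label_eq {x : ZMod n} {p : ZMod n × ℕ} (hp : D.IsVertex p)
    (h : firstFrom D.vertexSet x = D.emb p) : D.label x = D.vertexLabel p := by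
  rw [label, h, D.emb_injOn.leftInvOn_invFunOn hp]

lemma label_emb {p : ZMod n × ℕ} (hp : D.IsVertex p) : D.label (D.emb p) = D.vertexLabel p :=
  D.label_eq hp (firstFrom_of_mem ⟨p, hp, rfl⟩)

lemma label_g {s : ZMod n} (hs : s ∈ D.T) :
    D.label (D.g s) = D.merge (D.FScut.connectedComponentMk s) :=
  D.label_emb (p := (s, 0)) ⟨hs, Or.inl rfl⟩

lemma label_g1 {s : ZMod n} (hs : s ∈ D.T') : D.label (D.g1 s) = D.compX :=
  D.label_emb (p := (s, 1)) ⟨D.hT'T hs, Or.inr ⟨hs, Or.inl rfl⟩⟩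

lemma label_g2 {s : ZMod n} (hs : s ∈ D.T') : D.label (D.g2 s) = D.compX :=
  D.label_emb (p := (s, 2)) ⟨D.hT'T hs, Or.inr ⟨hs, Or.inr rfl⟩⟩

lemma label_g_add_one {s : ZMod n} (hs : s ∈ D.T') : D.label (D.g s + 1) = D.compX :=
  D.label_eq (p := (s, 1)) ⟨D.hT'T hs, Or.inr ⟨hs, Or.inl rfl⟩⟩ (D.firstFrom_g_add_one hs)

lemma label_g1_add_one {s : ZMod n} (hs : s ∈ D.T') : D.label (D.g1 s + 1) = D.compX :=
  D.label_eq (p := (s, 2)) ⟨D.hT'T hs, Or.inr ⟨hs, Or.inr rfl⟩⟩ (D.firstFrom_g1_add_one hs)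

lemma label_last_add_one {s : ZMod n} (hs : s ∈ D.T) :
    D.label (D.emb (D.last s) + 1) = D.merge (D.FScut.connectedComponentMk (s + 1)) := by
  rw [D.label_eq (p := (firstFrom D.T (s + 1), 0)) ⟨(firstFrom_spec ⟨_, D.k₀_mem⟩ _).1, Or.inl rfl⟩
    (D.firstFrom_last_add_one hs), vertexLabel, if_pos rfl,
    ConnectedComponent.sound (D.FScut_reachable_firstFrom (s + 1))]

lemma label_g2_add_one {s : ZMod n} (hs : s ∈ D.T') :
    D.label (D.g2 s + 1) = D.merge (D.FScut.connectedComponentMk (s + 1)) :=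
  D.emb_last_of_mem hs ▸ D.label_last_add_one (D.hT'T hs)

lemma label_g_add_one_of_notMem {s : ZMod n} (hs : s ∈ D.T) (hs' : s ∉ D.T') :
    D.label (D.g s + 1) = D.merge (D.FScut.connectedComponentMk (s + 1)) :=
  D.emb_last_of_notMem hs' ▸ D.label_last_add_one hs

lemma label_eq_of_adj {x y : ZMod n} (h : D.FD.Adj x y) : D.label x = D.label y := by
  refine fromRel_adj_elim (P := fun x y => D.label x = D.label y) (fun _ _ h => h.symm) ?_ h
  have hk := D.k₀_mem
  have hrk := D.r_mem' D.hk₀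
  have hbk := D.b_mem' D.hk₀
  rintro x y (⟨rfl, hx⟩ | ⟨s, hs, rfl, rfl⟩ | ⟨s, hs, h1, h2, ⟨rfl, rfl⟩ | ⟨rfl, rfl⟩⟩ |
    ⟨rfl, rfl⟩ | ⟨rfl, rfl⟩ | ⟨s, hs, h1, h2, rfl, rfl⟩ |
    ⟨s, hs, h1, h2, ⟨rfl, rfl⟩ | ⟨rfl, rfl⟩⟩ | ⟨rfl, rfl⟩ | ⟨rfl, rfl⟩ | ⟨rfl, rfl⟩)
  · rw [D.image_union_eq_vertexSet] at hx
    rw [label, label, firstFrom_add_one_of_notMem D.vertexSet_nonempty hx]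
  · by_cases hs' : s ∈ D.T'
    · rw [D.label_g_add_one hs', D.label_g_add_one (D.r_mem' hs')]
    · rw [D.label_g_add_one_of_notMem hs hs',
        D.label_g_add_one_of_notMem (D.r_mem hs) (mt (D.r_mem'_iff hs).1 hs')]
      exact D.merge_eq_of_reachable
        (D.FScut_reachable_red hs (fun h => hs' (h ▸ D.hk₀)) fun h => hs' (h ▸ hrk))
  · rw [D.label_g1_add_one hs, D.label_g1_add_one (D.r_mem' hs)]
  · rw [D.label_g2_add_one hs, D.label_g2_add_one (D.r_mem' hs)]
    exact D.merge_eq_of_reachable (D.FScut_reachable_red (D.hT'T hs) h1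
      fun h => h2 ((D.r_eq_iff hk (D.hT'T hs)).1 h.symm).symm)
  · rw [D.label_g1_add_one hrk, D.label_g2_add_one D.hk₀]
    exact (D.merge_compY).symm
  · rw [D.label_g2_add_one hrk, D.label_g1_add_one D.hk₀,
      ← ConnectedComponent.sound D.FScut_reachable_r_k₀_add_one]
    exact D.merge_compY
  · rw [D.label_g hs, D.label_g (D.b_mem hs)]
    exact D.merge_eq_of_reachable (D.FScut_reachable_blue hs h1
      fun h => h2 ((D.b_eq_iff hk hs).1 h.symm).symm)
  · rw [D.label_g1 hs, D.label_g1 (D.b_mem' hs)]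
  · rw [D.label_g2 hs, D.label_g2 (D.b_mem' hs)]
  · rw [D.label_g (D.b_mem hk), D.label_g1 D.hk₀,
      ← ConnectedComponent.sound D.FScut_reachable_b_k₀]
    exact D.merge_compX
  · rw [D.label_g1 hbk, D.label_g2 D.hk₀]
  · rw [D.label_g2 hbk, D.label_g hk]
    exact D.merge_compX.symm

lemma exists_reachable_g (x : ZMod n) :
    ∃ u ∈ D.T, D.FD.Reachable x (D.g u) ∧ D.label x = D.FScut.connectedComponentMk u := by
  obtain ⟨⟨s, j⟩, hp, hpx⟩ := (firstFrom_spec D.vertexSet_nonempty x).1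
  have hx := hpx ▸ D.FD_reachable_firstFrom x
  rw [D.label_eq hp hpx.symm, vertexLabel]
  obtain ⟨hs, rfl | ⟨hs', rfl | rfl⟩⟩ := hp
  · rw [if_pos rfl]
    by_cases hY : D.FScut.connectedComponentMk s = D.compY
    · refine ⟨D.k₀, D.k₀_mem, hx.trans ?_, by rw [hY, merge_compY, compX]⟩
      have hreach := D.FD_reachable_of_FScut (ConnectedComponent.exact hY)
      rw [firstFrom_of_mem (Finset.mem_coe.2 hs)] at hreach
      exact hreach.trans D.FD_reachable_firstFrom_k₀_add_one.symm
    · exact ⟨s, hs, hx, if_neg hY⟩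
  · exact ⟨D.k₀, D.k₀_mem, hx.trans (D.FD_reachable_g1_of_mem hs').symm, rfl⟩
  · exact ⟨D.k₀, D.k₀_mem, hx.trans (D.FD_reachable_g2_of_mem hs').symm, rfl⟩

lemma label_eq_iff (x y : ZMod n) : D.label x = D.label y ↔ D.FD.Reachable x y := by
  refine ⟨fun h => ?_, fun h => h.eq_of_adj D.label fun _ _ => D.label_eq_of_adj⟩
  obtain ⟨u, hu, hxu, hlu⟩ := D.exists_reachable_g x
  obtain ⟨v, hv, hyv, hlv⟩ := D.exists_reachable_g y
  have huv := D.FD_reachable_of_FScut (ConnectedComponent.exact (hlu ▸ hlv ▸ h))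
  rw [firstFrom_of_mem (Finset.mem_coe.2 hu), firstFrom_of_mem (Finset.mem_coe.2 hv)] at huv
  exact (hxu.trans huv).trans hyv.symm

lemma label_ne_compY (x : ZMod n) : D.label x ≠ D.compY := by
  unfold label vertexLabel
  split_ifs
  exacts [D.merge_ne_compY _, D.compX_ne_compY]

lemma range_label : Set.range D.label = {D.compY}ᶜ := by
  refine Set.Subset.antisymm ?_ fun q hq => ?_
  · rintro _ ⟨x, rfl⟩
    exact D.label_ne_compY x
  · induction q using ConnectedComponent.ind with
    | h u =>
      have ht := (firstFrom_spec ⟨_, D.k₀_mem⟩ u).1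
      refine ⟨D.g (firstFrom D.T u), ?_⟩
      rw [D.label_g ht, ← ConnectedComponent.sound (D.FScut_reachable_firstFrom u)]
      exact if_neg hq

theorem card_FD_add_one :
    Nat.card D.FD.ConnectedComponent + 1 = Nat.card D.FS.ConnectedComponent := by
  rw [D.FD.card_connectedComponent_eq_card_range D.label D.label_eq_iff, D.range_label,
    Nat.card_compl_singleton_add_one]
  exact Nat.card_congr (Quot.congrRight fun _ _ => D.FScut_reachable_iff)

end GoingDown

theorem stmt_11_general (n : ℕ) [NeZero n] (G : SimpleGraph (ZMod n))
    (T T' : Finset (ZMod n)) (r b g g1 g2 : ZMod n → ZMod n) (k₀ : ZMod n)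
    -- `S` is a disjoint union of colour-alternating cycles in `A` …
    (hr : ∀ i ∈ T, r i ∈ T ∧ r (r i) = i ∧ (auxRed n G).Adj i (r i))
    (hb : ∀ i ∈ T, b i ∈ T ∧ b (b i) = i ∧ (auxBlue n G).Adj i (b i))
    -- `k₀` is a vertex of the cycle `C` of `S` with vertex set `T'`
    (hk₀ : k₀ ∈ T') (hT'T : T' ⊆ T)
    (hT'cl : ∀ x ∈ T', r x ∈ T' ∧ b x ∈ T')
    (hT'conn : ∀ (P : ZMod n → Prop) (x : ZMod n), x ∈ T' → P x →
      (∀ z ∈ T', P z → P (r z) ∧ P (b z)) → ∀ y ∈ T', P y)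
    -- `k₀` separates components of `F(S)`
    (hsep : ¬ (FSgraph n T r b).Reachable k₀ (k₀ + 1))
    -- the embedding preserves the order of `D(S, s_k)`
    (hord1 : ∀ x ∈ T, ∀ y ∈ T, x.val < y.val → (g x).val < (g y).val)
    (hord2 : ∀ x ∈ T', (g x).val < (g1 x).val ∧ (g1 x).val < (g2 x).val)
    (hord3 : ∀ x ∈ T', ∀ y ∈ T, x.val < y.val → (g2 x).val < (g y).val) :
    Nat.card (FDgraph n T T' r b g g1 g2 k₀).ConnectedComponent + 1
      = Nat.card (FSgraph n T r b).ConnectedComponent :=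
  GoingDown.card_FD_add_one
    { T, T', r, b, g, g1, g2, k₀, hk₀, hT'T, hT'cl, hT'conn, hsep, hord1, hord2, hord3
      hr := fun i hi => ⟨(hr i hi).1, (hr i hi).2.1, (hr i hi).2.2.ne'⟩
      hb := fun i hi => ⟨(hb i hi).1, (hb i hi).2.1, (hb i hi).2.2.ne'⟩ }

/-- **Going down.**  Let `S ⊆ A(G,H)` be a disjoint union of colour-alternating
cycles without neighbouring vertices, let `s_k = k₀` be a vertex of `S` separating
components of `F(S)` (i.e. `v_k` and `v_{k+1}` lie in different components of
`F(S)`), lying on the cycle `C` of `S` with vertex set `T'`.  Let `D` be an ordered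
subgraph of `A` without neighbouring vertices that is a going-down version
`D(S, s_k)` of `S`, given by injective order-preserving embeddings `g` (originals),
`g1`, `g2` (the `+1/3` and `+2/3` copies of the vertices of `C`) whose required
coloured edges are all present in `A`.  Then the 2-factor `F(D)` has exactly one
fewer connected component than `F(S)`. -/
theorem stmt_11 (n : ℕ) [NeZero n] (hn : 3 ≤ n) (G : SimpleGraph (ZMod n))
    (hH : ∀ i : ZMod n, G.Adj i (i + 1))
    (T T' : Finset (ZMod n)) (r b g g1 g2 : ZMod n → ZMod n) (k₀ : ZMod n)
    -- `S` is a disjoint union of colour-alternating cycles in `A` …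
    (hr : ∀ i ∈ T, r i ∈ T ∧ r (r i) = i ∧ (auxRed n G).Adj i (r i))
    (hb : ∀ i ∈ T, b i ∈ T ∧ b (b i) = i ∧ (auxBlue n G).Adj i (b i))
    -- … without neighbouring vertices
    (hnb : ∀ i ∈ T, i + 1 ∉ T)
    -- `k₀` is a vertex of the cycle `C` of `S` with vertex set `T'`
    (hk₀ : k₀ ∈ T') (hT'T : T' ⊆ T)
    (hT'cl : ∀ x ∈ T', r x ∈ T' ∧ b x ∈ T')
    (hT'conn : ∀ (P : ZMod n → Prop) (x : ZMod n), x ∈ T' → P x →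
      (∀ z ∈ T', P z → P (r z) ∧ P (b z)) → ∀ y ∈ T', P y)
    -- `k₀` separates components of `F(S)`
    (hsep : ¬ (FSgraph n T r b).Reachable k₀ (k₀ + 1))
    -- `D` is embedded injectively via `g`, `g1`, `g2`
    (hginj : ∀ x ∈ T, ∀ y ∈ T, g x = g y → x = y)
    (hg1inj : ∀ x ∈ T', ∀ y ∈ T', g1 x = g1 y → x = y)
    (hg2inj : ∀ x ∈ T', ∀ y ∈ T', g2 x = g2 y → x = y)
    (hgg12 : ∀ x ∈ T, ∀ y ∈ T', g x ≠ g1 y ∧ g x ≠ g2 y)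
    (hg12 : ∀ x ∈ T', ∀ y ∈ T', g1 x ≠ g2 y)
    -- the embedding preserves the order of `D(S, s_k)`
    (hord1 : ∀ x ∈ T, ∀ y ∈ T, x.val < y.val → (g x).val < (g y).val)
    (hord2 : ∀ x ∈ T', (g x).val < (g1 x).val ∧ (g1 x).val < (g2 x).val)
    (hord3 : ∀ x ∈ T', ∀ y ∈ T, x.val < y.val → (g2 x).val < (g y).val)
    -- `D` is a subgraph of `A`: all its coloured edges are present in `A`
    (hA1 : ∀ s ∈ T, (auxRed n G).Adj (g s) (g (r s)))
    (hA2 : ∀ s ∈ T, s ≠ k₀ → b s ≠ k₀ → (auxBlue n G).Adj (g s) (g (b s)))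
    (hA3 : ∀ s ∈ T', s ≠ k₀ → r s ≠ k₀ →
      (auxRed n G).Adj (g1 s) (g1 (r s)) ∧ (auxRed n G).Adj (g2 s) (g2 (r s)))
    (hA4 : ∀ s ∈ T', s ≠ k₀ → b s ≠ k₀ →
      (auxBlue n G).Adj (g1 s) (g1 (b s)) ∧ (auxBlue n G).Adj (g2 s) (g2 (b s)))
    (hA5 : (auxRed n G).Adj (g1 (r k₀)) (g2 k₀) ∧
      (auxRed n G).Adj (g2 (r k₀)) (g1 k₀))
    (hA6 : (auxBlue n G).Adj (g (b k₀)) (g1 k₀) ∧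
      (auxBlue n G).Adj (g1 (b k₀)) (g2 k₀) ∧
      (auxBlue n G).Adj (g2 (b k₀)) (g k₀))
    -- `D` has no neighbouring vertices
    (hnbD : ∀ x : ZMod n,
      x ∈ g '' (T : Set (ZMod n)) ∪ g1 '' (T' : Set (ZMod n))
        ∪ g2 '' (T' : Set (ZMod n)) →
      x + 1 ∉ g '' (T : Set (ZMod n)) ∪ g1 '' (T' : Set (ZMod n))
        ∪ g2 '' (T' : Set (ZMod n))) :
    Nat.card (FDgraph n T T' r b g g1 g2 k₀).ConnectedComponent + 1
      = Nat.card (FSgraph n T r b).ConnectedComponent :=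
  stmt_11_general n G T T' r b g g1 g2 k₀ hr hb hk₀ hT'T hT'cl hT'conn hsep hord1 hord2 hord3
end
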